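/- arXiv:2202.09932 — 6 statements merged into one kernel-verified Lean document; each statement's English description precedes it below -/
import Mathlib

section
/- Let X be a real Banach space, 0 < r < 1, and a ∈ X with r < ‖a‖ ≤ 1. Define T : Lip₀({0} ∪ B[a,r]) → Lip₀(B_X) ×_∞ ℝ by T(f)(x) = (f(r·x + a) - f(a), f(a)) for x in the closed unit ball B_X. Then T is a bounded linear bijection with ‖T‖ ≤ 1 and ‖T⁻¹‖ ≤ max{1/r, 2/(‖a‖ - r)}. In particular, Lip₀({0} ∪ B[a,r]) is isomorphic to Lip₀(B_X) ⊕_∞ ℝ with distortion at most max{1/r, 2/(‖a‖ - r)}. -/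
/-! `T` rescales the restriction of `f` to `B[a, r]` onto the unit ball and records `f a`
separately; it has norm at most `1` because `x ↦ r • x + a` is `r`-Lipschitz with `r ≤ 1` and
`|f a| ≤ ‖f‖ ‖a‖ ≤ ‖f‖`. Its inverse is explicit: `(g, λ)` goes to the function that vanishes at `0`
and is `m ↦ g (r⁻¹ • (m - a)) + λ` on `B[a, r]`. This function is `‖g‖ / r`-Lipschitz on the ball
and bounded there by `‖g‖ + |λ|`, while the ball lies at distance at least `‖a‖ - r` from `0`, so
the difference quotients involving `0` are at most `2 max ‖g‖ |λ| / (‖a‖ - r)`. -/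

open Metric

/-- `f : S → ℝ` belongs to Lip₀(S) (base point z): it vanishes at z and is Lipschitz. -/
def MemLip0 {X : Type*} [MetricSpace X] (z : X) (S : Set X) (f : S → ℝ) : Prop :=
  (∀ x : S, (x : X) = z → f x = 0) ∧
  ∃ K : ℝ, 0 ≤ K ∧ ∀ x y : S, |f x - f y| ≤ K * dist x y

/-- The Lipschitz-constant norm of `f : S → ℝ`. -/
noncomputable def lipNormOn {X : Type*} [MetricSpace X] (S : Set X) (f : S → ℝ) : ℝ :=
  sInf {K : ℝ | 0 ≤ K ∧ ∀ x y : S, |f x - f y| ≤ K * dist x y}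

section LipNorm

variable {X : Type*} [MetricSpace X] {S : Set X} {f : S → ℝ}

lemma lipNormOn_le {K : ℝ} (hK : 0 ≤ K) (h : ∀ x y : S, |f x - f y| ≤ K * dist x y) :
    lipNormOn S f ≤ K :=
  csInf_le ⟨0, fun _ hk => hk.1⟩ ⟨hK, h⟩

lemma lipNormOn_nonneg (hf : ∃ K : ℝ, 0 ≤ K ∧ ∀ x y : S, |f x - f y| ≤ K * dist x y) :
    0 ≤ lipNormOn S f :=
  le_csInf hf fun _ hK => hK.1

lemma abs_sub_le_lipNormOn_mul_dist
    (hf : ∃ K : ℝ, 0 ≤ K ∧ ∀ x y : S, |f x - f y| ≤ K * dist x y) (x y : S) :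
    |f x - f y| ≤ lipNormOn S f * dist x y := by
  rcases (dist_nonneg : 0 ≤ dist x y).eq_or_lt with hxy | hxy
  · simp [dist_eq_zero.mp hxy.symm]
  · rw [← div_le_iff₀ hxy]
    exact le_csInf hf fun K hK => (div_le_iff₀ hxy).mpr (hK.2 x y)

lemma abs_le_mul_dist_of_eq_zero {L : ℝ} (hf : ∀ x y : S, |f x - f y| ≤ L * dist x y) {z : S}
    (hz : f z = 0) (x : S) : |f x| ≤ L * dist x z := by
  simpa [hz] using hf x z

end LipNorm

section SeparatedPoint

variable {X : Type*} [MetricSpace X] {z : X} {A : Set X} {F : ({z} ∪ A : Set X) → ℝ}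

lemma abs_sub_le_of_vanishing_at_separated_point {L C δ : ℝ} (hL : 0 ≤ L) (hδ : 0 < δ)
    (hFz : ∀ x : ({z} ∪ A : Set X), (x : X) = z → F x = 0)
    (hFA : ∀ x y : ({z} ∪ A : Set X), (x : X) ∈ A → (y : X) ∈ A → |F x - F y| ≤ L * dist x y)
    (hFC : ∀ x : ({z} ∪ A : Set X), (x : X) ∈ A → |F x| ≤ C)
    (hsep : ∀ x ∈ A, δ ≤ dist x z) (x y : ({z} ∪ A : Set X)) :
    |F x - F y| ≤ max L (C / δ) * dist x y := by
  have point_to_A : ∀ x y : ({z} ∪ A : Set X), (x : X) = z → (y : X) ∈ A →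
      |F x - F y| ≤ max L (C / δ) * dist x y := by
    intro x y hx hy
    have hC : 0 ≤ C := (abs_nonneg _).trans (hFC y hy)
    calc |F x - F y| = |F y| := by rw [hFz x hx, zero_sub, abs_neg]
      _ ≤ C / δ * δ := by rw [div_mul_cancel₀ _ hδ.ne']; exact hFC y hy
      _ ≤ max L (C / δ) * dist x y := by
        rw [Subtype.dist_eq, dist_comm, hx]
        gcongr
        · exact le_max_right _ _
        · exact hsep _ hy
  rcases x.2 with hx | hx <;> rcases y.2 with hy | hy
  · rw [hFz x hx, hFz y hy, sub_self, abs_zero]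
    positivity
  · exact point_to_A x y hx hy
  · rw [abs_sub_comm, dist_comm]
    exact point_to_A y x hy hx
  · exact (hFA x y hx hy).trans (by gcongr; exact le_max_left _ _)

end SeparatedPoint

section PointedBall

variable {X : Type*} [NormedAddCommGroup X] {r : ℝ} {a : X}

local notation "M" => ({0} ∪ closedBall a r : Set X)
local notation "B" => closedBall (0 : X) 1

lemma center_mem_pointedBall (hr : 0 ≤ r) : a ∈ M := Or.inr (mem_closedBall_self hr)

lemma sub_le_norm_of_mem_closedBall {m : X} (hm : m ∈ closedBall a r) : ‖a‖ - r ≤ ‖m‖ := by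
  have := norm_sub_norm_le a m
  rw [← dist_eq_norm, dist_comm] at this
  linarith [mem_closedBall.mp hm]

lemma abs_apply_center_le (hr : 0 ≤ r) (ha : ‖a‖ ≤ 1) {f : M → ℝ}
    (hf0 : ∀ m : M, (m : X) = 0 → f m = 0) {L : ℝ} (hL : 0 ≤ L)
    (hf : ∀ x y : M, |f x - f y| ≤ L * dist x y) :
    |f ⟨a, center_mem_pointedBall hr⟩| ≤ L := by
  have h := abs_le_mul_dist_of_eq_zero hf (hf0 ⟨0, Or.inl rfl⟩ rfl) ⟨a, center_mem_pointedBall hr⟩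
  rw [Subtype.dist_eq, dist_zero_right] at h
  exact h.trans (mul_le_of_le_one_right hL ha)

variable [NormedSpace ℝ X]

lemma smul_add_mem_closedBall (hr : 0 ≤ r) {x : X} (hx : x ∈ B) :
    r • x + a ∈ closedBall a r := by
  rw [mem_closedBall, dist_add_self_left, norm_smul, Real.norm_of_nonneg hr]
  exact mul_le_of_le_one_right hr (mem_closedBall_zero_iff.mp hx)

lemma inv_smul_sub_mem_closedBall {m : X} (hm : m ∈ closedBall a r) : r⁻¹ • (m - a) ∈ B := by
  have hr : 0 ≤ r := dist_nonneg.trans hm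
  rw [mem_closedBall_zero_iff, norm_smul, norm_inv, Real.norm_of_nonneg hr, ← dist_eq_norm]
  exact inv_mul_le_one_of_le₀ hm hr

variable (r a) in
def toPointedBall (hr : 0 ≤ r) (x : B) : M :=
  ⟨r • (x : X) + a, Or.inr (smul_add_mem_closedBall hr x.2)⟩

lemma dist_toPointedBall (hr : 0 ≤ r) (x y : B) :
    dist (toPointedBall r a hr x) (toPointedBall r a hr y) = r * dist x y := by
  rw [Subtype.dist_eq, Subtype.dist_eq]
  simp only [toPointedBall, dist_add_right, dist_smul₀, Real.norm_of_nonneg hr]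

open Classical in
variable (r a) in
noncomputable def extendFromBall (g : B → ℝ) (c : ℝ) (m : M) : ℝ :=
  if hm : (m : X) ∈ closedBall a r then
    g ⟨r⁻¹ • ((m : X) - a), inv_smul_sub_mem_closedBall hm⟩ + c
  else 0

lemma extendFromBall_of_mem {g : B → ℝ} {c : ℝ} {m : M} (hm : (m : X) ∈ closedBall a r) :
    extendFromBall r a g c m = g ⟨r⁻¹ • ((m : X) - a), inv_smul_sub_mem_closedBall hm⟩ + c :=
  dif_pos hm

lemma extendFromBall_of_eq_zero (hra : r < ‖a‖) {g : B → ℝ} {c : ℝ} {m : M}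
    (hm : (m : X) = 0) : extendFromBall r a g c m = 0 :=
  dif_neg fun hball => by
    have := sub_le_norm_of_mem_closedBall hball
    rw [hm, norm_zero] at this
    linarith

lemma extendFromBall_toPointedBall (hr : 0 < r) (g : B → ℝ) (c : ℝ) (x : B) :
    extendFromBall r a g c (toPointedBall r a hr.le x) = g x + c := by
  rw [extendFromBall_of_mem (smul_add_mem_closedBall hr.le x.2)]
  congr
  simp [toPointedBall, inv_smul_smul₀ hr.ne']

lemma extendFromBall_center (hr : 0 ≤ r) {g : B → ℝ} (hg : ∀ x : B, (x : X) = 0 → g x = 0)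
    (c : ℝ) : extendFromBall r a g c ⟨a, center_mem_pointedBall hr⟩ = c := by
  rw [extendFromBall_of_mem (mem_closedBall_self hr), hg _ (by simp), zero_add]

lemma eq_extendFromBall (hr : 0 < r) {f : M → ℝ} (hf0 : ∀ m : M, (m : X) = 0 → f m = 0) :
    f = extendFromBall r a
      (fun x => f (toPointedBall r a hr.le x) - f ⟨a, center_mem_pointedBall hr.le⟩)
      (f ⟨a, center_mem_pointedBall hr.le⟩) := by
  funext m
  by_cases hm : (m : X) ∈ closedBall a r
  · have hm' : toPointedBall r a hr.le
        ⟨r⁻¹ • ((m : X) - a), inv_smul_sub_mem_closedBall hm⟩ = m :=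
      Subtype.ext (by simp [toPointedBall, smul_inv_smul₀ hr.ne'])
    rw [extendFromBall_of_mem hm, hm', sub_add_cancel]
  · rw [extendFromBall, dif_neg hm, hf0 m (m.2.resolve_right hm)]

lemma abs_sub_comp_toPointedBall_le (hr : 0 ≤ r) (hr1 : r ≤ 1) {f : M → ℝ} {L : ℝ}
    (hL : 0 ≤ L) (hf : ∀ x y : M, |f x - f y| ≤ L * dist x y) (c : ℝ) (x y : B) :
    |(f (toPointedBall r a hr x) - c) - (f (toPointedBall r a hr y) - c)| ≤ L * dist x y := by
  rw [sub_sub_sub_cancel_right]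
  calc _ ≤ L * (r * dist x y) := dist_toPointedBall (a := a) hr x y ▸ hf _ _
    _ ≤ L * dist x y := by gcongr; exact mul_le_of_le_one_left dist_nonneg hr1

lemma abs_sub_extendFromBall_le (hr : 0 < r) (hra : r < ‖a‖) {g : B → ℝ}
    (hg0 : ∀ x : B, (x : X) = 0 → g x = 0) {K : ℝ} (hK : 0 ≤ K)
    (hg : ∀ x y : B, |g x - g y| ≤ K * dist x y) (c : ℝ) (x y : M) :
    |extendFromBall r a g c x - extendFromBall r a g c y| ≤
      max (1 / r) (2 / (‖a‖ - r)) * max K |c| * dist x y := by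
  have on_ball : ∀ x y : M, (x : X) ∈ closedBall a r → (y : X) ∈ closedBall a r →
      |extendFromBall r a g c x - extendFromBall r a g c y| ≤ K / r * dist x y := by
    intro x y hx hy
    rw [extendFromBall_of_mem hx, extendFromBall_of_mem hy, add_sub_add_right_eq_sub]
    refine (hg _ _).trans_eq ?_
    rw [Subtype.dist_eq, Subtype.dist_eq, dist_smul₀, dist_sub_right, norm_inv,
      Real.norm_of_nonneg hr.le]
    ring
  have bounded : ∀ x : M, (x : X) ∈ closedBall a r → |extendFromBall r a g c x| ≤ K + |c| := by
    intro x hx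
    rw [extendFromBall_of_mem hx]
    refine (abs_add_le _ _).trans (add_le_add_left ?_ _)
    have hB := inv_smul_sub_mem_closedBall hx
    have h := abs_le_mul_dist_of_eq_zero hg
      (hg0 ⟨0, mem_closedBall_self zero_le_one⟩ rfl) ⟨_, hB⟩
    rw [Subtype.dist_eq, dist_zero_right] at h
    exact h.trans (mul_le_of_le_one_right hK (mem_closedBall_zero_iff.mp hB))
  have separated : ∀ m ∈ closedBall a r, ‖a‖ - r ≤ dist m 0 := fun m hm => by
    rw [dist_zero_right]; exact sub_le_norm_of_mem_closedBall hm
  refine (abs_sub_le_of_vanishing_at_separated_point (by positivity) (sub_pos.mpr hra)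
    (fun m hm => extendFromBall_of_eq_zero hra hm) on_ball bounded separated x y).trans ?_
  gcongr
  apply max_le
  · calc K / r = 1 / r * K := by ring
      _ ≤ max (1 / r) (2 / (‖a‖ - r)) * max K |c| := by gcongr <;> simp
  · have hδ : 0 < ‖a‖ - r := sub_pos.mpr hra
    calc (K + |c|) / (‖a‖ - r) ≤ 2 / (‖a‖ - r) * max K |c| := by
          rw [div_mul_eq_mul_div, two_mul]; gcongr <;> simp
      _ ≤ max (1 / r) (2 / (‖a‖ - r)) * max K |c| := by gcongr; simp

end PointedBall

theorem stmt4_general {X : Type*} [NormedAddCommGroup X] [NormedSpace ℝ X]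
    (r : ℝ) (a : X) (hr0 : 0 < r) (hr1 : r < 1) (hra : r < ‖a‖) (ha1 : ‖a‖ ≤ 1)
    (M B : Set X) (hM : M = {0} ∪ closedBall a r) (hB : B = closedBall (0 : X) 1)
    (T : {f : M → ℝ // MemLip0 0 M f} → {g : B → ℝ // MemLip0 0 B g} × ℝ)
    (hT : ∀ f : {f : M → ℝ // MemLip0 0 M f}, ∀ x : B,
      ∀ hx : r • (x : X) + a ∈ M, ∀ haM : a ∈ M,
        (T f).1.1 x = f.1 ⟨r • (x : X) + a, hx⟩ - f.1 ⟨a, haM⟩ ∧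
        (T f).2 = f.1 ⟨a, haM⟩) :
    Function.Bijective T ∧
    (∀ f g h : {f : M → ℝ // MemLip0 0 M f}, ∀ c : ℝ,
      (∀ x : M, h.1 x = c * f.1 x + g.1 x) →
      (∀ x : B, (T h).1.1 x = c * (T f).1.1 x + (T g).1.1 x) ∧
        (T h).2 = c * (T f).2 + (T g).2) ∧
    (∀ f : {f : M → ℝ // MemLip0 0 M f},
      max (lipNormOn B (T f).1.1) |(T f).2| ≤ lipNormOn M f.1) ∧
    (∀ f : {f : M → ℝ // MemLip0 0 M f},
      lipNormOn M f.1 ≤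
        max (1 / r) (2 / (‖a‖ - r)) * max (lipNormOn B (T f).1.1) |(T f).2|) := by
  subst hM hB
  have haM := center_mem_pointedBall (a := a) hr0.le
  have hT₁ : ∀ f, (T f).1.1 = fun x => f.1 (toPointedBall r a hr0.le x) - f.1 ⟨a, haM⟩ :=
    fun f => funext fun x => (hT f x _ haM).1
  have hT₂ : ∀ f, (T f).2 = f.1 ⟨a, haM⟩ :=
    fun f => (hT f ⟨0, by simp⟩ (toPointedBall r a hr0.le _).2 haM).2
  have hT_inv : ∀ f, f.1 = extendFromBall r a (T f).1.1 (T f).2 := fun f => by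
    rw [hT₁, hT₂]; exact eq_extendFromBall hr0 f.2.1
  refine ⟨⟨fun f g hfg => Subtype.ext (by rw [hT_inv f, hT_inv g, hfg]), ?_⟩, ?_, ?_, ?_⟩
  · rintro ⟨⟨g, hg0, K, hK, hg⟩, c⟩
    refine ⟨⟨extendFromBall r a g c, fun m hm => extendFromBall_of_eq_zero hra hm, _,
      by positivity, abs_sub_extendFromBall_le hr0 hra hg0 hK hg c⟩, Prod.ext (Subtype.ext ?_) ?_⟩
    · simp only [hT₁, extendFromBall_toPointedBall hr0, extendFromBall_center hr0.le hg0,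
        add_sub_cancel_right]
    · exact (hT₂ _).trans (extendFromBall_center hr0.le hg0 c)
  · intro f g h c hh
    refine ⟨fun x => ?_, by rw [hT₂, hT₂, hT₂, hh]⟩
    simp only [hT₁, hh]
    ring
  · intro f
    have hL := lipNormOn_nonneg f.2.2
    have hf := abs_sub_le_lipNormOn_mul_dist f.2.2
    refine max_le (lipNormOn_le hL ?_) ?_
    · rw [hT₁]; exact abs_sub_comp_toPointedBall_le hr0.le hr1.le hL hf _
    · rw [hT₂]; exact abs_apply_center_le hr0.le ha1 f.2.1 hL hf
  · intro f
    have hg := (T f).1.2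
    rw [hT_inv f]
    exact lipNormOn_le (by positivity) (abs_sub_extendFromBall_le hr0 hra hg.1
      (lipNormOn_nonneg hg.2) (abs_sub_le_lipNormOn_mul_dist hg.2) _)

/-- The map T(f)(x) = (f(r·x + a) - f(a), f(a)) is a linear bijection from
Lip₀({0} ∪ B[a,r]) onto Lip₀(B_X) ×_∞ ℝ with ‖T‖ ≤ 1 and
‖T⁻¹‖ ≤ max{1/r, 2/(‖a‖-r)}. -/
theorem stmt4 {X : Type*} [NormedAddCommGroup X] [NormedSpace ℝ X] [CompleteSpace X]
    (r : ℝ) (a : X) (hr0 : 0 < r) (hr1 : r < 1) (hra : r < ‖a‖) (ha1 : ‖a‖ ≤ 1)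
    (M B : Set X) (hM : M = {0} ∪ closedBall a r) (hB : B = closedBall (0 : X) 1)
    (T : {f : M → ℝ // MemLip0 0 M f} → {g : B → ℝ // MemLip0 0 B g} × ℝ)
    (hT : ∀ f : {f : M → ℝ // MemLip0 0 M f}, ∀ x : B,
      ∀ hx : r • (x : X) + a ∈ M, ∀ haM : a ∈ M,
        (T f).1.1 x = f.1 ⟨r • (x : X) + a, hx⟩ - f.1 ⟨a, haM⟩ ∧
        (T f).2 = f.1 ⟨a, haM⟩) :
    Function.Bijective T ∧
    (∀ f g h : {f : M → ℝ // MemLip0 0 M f}, ∀ c : ℝ,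
      (∀ x : M, h.1 x = c * f.1 x + g.1 x) →
      (∀ x : B, (T h).1.1 x = c * (T f).1.1 x + (T g).1.1 x) ∧
        (T h).2 = c * (T f).2 + (T g).2) ∧
    (∀ f : {f : M → ℝ // MemLip0 0 M f},
      max (lipNormOn B (T f).1.1) |(T f).2| ≤ lipNormOn M f.1) ∧
    (∀ f : {f : M → ℝ // MemLip0 0 M f},
      lipNormOn M f.1 ≤
        max (1 / r) (2 / (‖a‖ - r)) * max (lipNormOn B (T f).1.1) |(T f).2|) :=
  stmt4_general r a hr0 hr1 hra ha1 M B hM hB T hT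
end

section
/- Let X be a real Banach space, 0 < r < 1, and a ∈ B_X with ‖a‖ > r. The map S : Lip₀(B_X) ⊕_∞ ℝ → Lip₀({0} ∪ B[a,r]) defined by S(g,λ)(x) = g((x-a)/r) + λ for x ∈ B[a,r] and S(g,λ)(0) = 0 is a well-defined bounded linear operator with ‖S‖ ≤ max{1/r, 2/(‖a‖ - r)}. -/
open Metric

lemma lip_le' {X : Type*} [MetricSpace X] {S : Set X} {f : S → ℝ} {K : ℝ}
    (hK : 0 ≤ K) (h : ∀ x y : S, |f x - f y| ≤ K * dist x y) :
    lipNormOn S f ≤ K :=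
  csInf_le ⟨0, fun _ hK' => hK'.1⟩ ⟨hK, h⟩

lemma lip_facts' {X : Type*} [MetricSpace X] {S : Set X} {f : S → ℝ}
    (h : ∃ K : ℝ, 0 ≤ K ∧ ∀ x y : S, |f x - f y| ≤ K * dist x y) :
    0 ≤ lipNormOn S f ∧ ∀ x y : S, |f x - f y| ≤ lipNormOn S f * dist x y := by
  obtain ⟨K0, hK0, hK0'⟩ := h
  have hne : {K : ℝ | 0 ≤ K ∧ ∀ x y : S, |f x - f y| ≤ K * dist x y}.Nonempty :=
    ⟨K0, hK0, hK0'⟩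
  have hnn : 0 ≤ lipNormOn S f := le_csInf hne fun K hK => hK.1
  refine ⟨hnn, fun x y => ?_⟩
  rcases eq_or_lt_of_le (dist_nonneg : (0:ℝ) ≤ dist x y) with hd | hd
  · have hxy : x = y := dist_eq_zero.mp hd.symm
    simp [hxy]
  · have h1 : |f x - f y| / dist x y ≤ lipNormOn S f :=
      le_csInf hne fun K hK => (div_le_iff₀ hd).mpr (hK.2 x y)
    calc |f x - f y| = |f x - f y| / dist x y * dist x y := by field_simp
    _ ≤ lipNormOn S f * dist x y := mul_le_mul_of_nonneg_right h1 hd.le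

/-- The map S(g,λ)(x) = g((x-a)/r) + λ on B[a,r], S(g,λ)(0) = 0, is a well-defined
bounded linear operator Lip₀(B_X) ⊕_∞ ℝ → Lip₀({0} ∪ B[a,r]) of norm at most
max{1/r, 2/(‖a‖-r)}. -/
theorem stmt5 {X : Type*} [NormedAddCommGroup X] [NormedSpace ℝ X] [CompleteSpace X]
    (r : ℝ) (a : X) (hr0 : 0 < r) (hr1 : r < 1) (hra : r < ‖a‖) (ha1 : ‖a‖ ≤ 1)
    (M B : Set X) (hM : M = {0} ∪ closedBall a r) (hB : B = closedBall (0 : X) 1)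
    (S : {g : B → ℝ // MemLip0 0 B g} × ℝ → (M → ℝ))
    (hS : ∀ p : {g : B → ℝ // MemLip0 0 B g} × ℝ, ∀ x : M,
      (∀ hx : r⁻¹ • ((x : X) - a) ∈ B, (x : X) ∈ closedBall a r →
        S p x = p.1.1 ⟨r⁻¹ • ((x : X) - a), hx⟩ + p.2) ∧
      ((x : X) = 0 → S p x = 0)) :
    (∀ p : {g : B → ℝ // MemLip0 0 B g} × ℝ,
      MemLip0 0 M (S p) ∧
      lipNormOn M (S p) ≤
        max (1 / r) (2 / (‖a‖ - r)) * max (lipNormOn B p.1.1) |p.2|) ∧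
    (∀ g₁ g₂ g₃ : {g : B → ℝ // MemLip0 0 B g}, ∀ l₁ l₂ l₃ c : ℝ,
      (∀ x : B, g₃.1 x = c * g₁.1 x + g₂.1 x) → l₃ = c * l₁ + l₂ →
      ∀ x : M, S (g₃, l₃) x = c * S (g₁, l₁) x + S (g₂, l₂) x) := by
  have har : 0 < ‖a‖ - r := by linarith
  have hB0 : (0:X) ∈ B := by rw [hB]; exact mem_closedBall_self (by norm_num)
  have hmem : ∀ x : X, x ∈ closedBall a r → r⁻¹ • (x - a) ∈ B := by
    intro x hx
    rw [hB, mem_closedBall, dist_zero_right, norm_smul, Real.norm_eq_abs,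
      abs_of_pos (inv_pos.mpr hr0)]
    have h1 : ‖x - a‖ ≤ r := by rwa [mem_closedBall, dist_eq_norm] at hx
    have h2 := mul_le_mul_of_nonneg_left h1 (inv_nonneg.mpr hr0.le)
    rwa [inv_mul_cancel₀ hr0.ne'] at h2
  have hcases : ∀ x : M, (x : X) = 0 ∨ (x : X) ∈ closedBall a r := by
    intro x
    have hx : (x : X) ∈ ({0} ∪ closedBall a r : Set X) := by
      rw [← hM]; exact x.2
    rcases hx with h | h
    · exact Or.inl (by simpa using h)
    · exact Or.inr h
  set K' : ℝ := max (1 / r) (2 / (‖a‖ - r)) with hK'def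
  have hKr : 1 / r ≤ K' := le_max_left _ _
  have hK2 : 2 / (‖a‖ - r) ≤ K' := le_max_right _ _
  have hK'0 : 0 < K' := lt_of_lt_of_le (by positivity) hKr
  constructor
  · intro p
    set L : ℝ := lipNormOn B p.1.1 with hLdef
    obtain ⟨hL0, hLb⟩ := lip_facts' p.1.2.2
    set Mx : ℝ := max L |p.2| with hMxdef
    have hMx0 : 0 ≤ Mx := le_trans hL0 (le_max_left _ _)
    have hLMx : L ≤ Mx := le_max_left _ _
    have hlMx : |p.2| ≤ Mx := le_max_right _ _
    have hg0 : p.1.1 ⟨0, hB0⟩ = 0 := p.1.2.1 ⟨0, hB0⟩ rfl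
    -- |g u| ≤ L for u in B
    have hgb : ∀ u : X, ∀ hu : u ∈ B, |p.1.1 ⟨u, hu⟩| ≤ L := by
      intro u hu
      have h1 := hLb ⟨u, hu⟩ ⟨0, hB0⟩
      rw [hg0, sub_zero, Subtype.dist_eq, dist_zero_right] at h1
      have h2 : ‖u‖ ≤ 1 := by rwa [hB, mem_closedBall, dist_zero_right] at hu
      calc |p.1.1 ⟨u, hu⟩| ≤ L * ‖u‖ := h1
      _ ≤ L * 1 := mul_le_mul_of_nonneg_left h2 hL0
      _ = L := mul_one L
    -- mixed case
    have hmix : ∀ x y : M, (x : X) = 0 → (y : X) ∈ closedBall a r →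
        |S p x - S p y| ≤ K' * Mx * dist x y := by
      intro x y hx hy
      have hu := hmem y hy
      rw [(hS p x).2 hx, (hS p y).1 hu hy, zero_sub, abs_neg]
      have h1 : |p.1.1 ⟨r⁻¹ • ((y:X) - a), hu⟩ + p.2| ≤ 2 * Mx := by
        calc |p.1.1 ⟨r⁻¹ • ((y:X) - a), hu⟩ + p.2|
            ≤ |p.1.1 ⟨r⁻¹ • ((y:X) - a), hu⟩| + |p.2| := abs_add_le _ _
        _ ≤ Mx + Mx := add_le_add (le_trans (hgb _ hu) hLMx) hlMx
        _ = 2 * Mx := by ring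
      have hdist : ‖a‖ - r ≤ dist x y := by
        rw [Subtype.dist_eq, hx, dist_eq_norm, zero_sub, norm_neg]
        have h2 : ‖(y:X) - a‖ ≤ r := by rwa [mem_closedBall, dist_eq_norm] at hy
        have h3 : ‖a‖ ≤ ‖(y:X) - a‖ + ‖(y:X)‖ := by
          calc ‖a‖ = ‖(y:X) - a - (y:X)‖ := by rw [sub_sub_cancel_left, norm_neg]
          _ ≤ ‖(y:X) - a‖ + ‖(y:X)‖ := norm_sub_le _ _
        linarith
      have h2 : 2 ≤ K' * (‖a‖ - r) := by rwa [div_le_iff₀ har] at hK2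
      calc |p.1.1 ⟨r⁻¹ • ((y:X) - a), hu⟩ + p.2| ≤ 2 * Mx := h1
      _ ≤ K' * (‖a‖ - r) * Mx := mul_le_mul_of_nonneg_right h2 hMx0
      _ ≤ K' * dist x y * Mx :=
          mul_le_mul_of_nonneg_right (mul_le_mul_of_nonneg_left hdist hK'0.le) hMx0
      _ = K' * Mx * dist x y := by ring
    have hbound : ∀ x y : M, |S p x - S p y| ≤ K' * Mx * dist x y := by
      intro x y
      rcases hcases x with hx | hx
      · rcases hcases y with hy | hy
        · rw [(hS p x).2 hx, (hS p y).2 hy, sub_zero, abs_zero]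
          exact mul_nonneg (mul_nonneg hK'0.le hMx0) dist_nonneg
        · exact hmix x y hx hy
      · rcases hcases y with hy | hy
        · rw [abs_sub_comm, dist_comm]
          exact hmix y x hy hx
        · have hux := hmem x hx
          have huy := hmem y hy
          rw [(hS p x).1 hux hx, (hS p y).1 huy hy]
          have h1 := hLb ⟨r⁻¹ • ((x:X) - a), hux⟩ ⟨r⁻¹ • ((y:X) - a), huy⟩
          rw [Subtype.dist_eq] at h1
          have hdd : dist (r⁻¹ • ((x:X) - a)) (r⁻¹ • ((y:X) - a)) = r⁻¹ * dist (x:X) (y:X) := by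
            rw [dist_eq_norm, ← smul_sub, norm_smul, Real.norm_eq_abs,
              abs_of_pos (inv_pos.mpr hr0), dist_eq_norm]
            congr 1
            abel
          rw [hdd] at h1
          have hstep : L * (r⁻¹ * dist (x:X) (y:X)) ≤ K' * Mx * dist x y := by
            rw [Subtype.dist_eq]
            have hLr : L * r⁻¹ ≤ K' * Mx := by
              calc L * r⁻¹ ≤ Mx * r⁻¹ :=
                mul_le_mul_of_nonneg_right hLMx (inv_nonneg.mpr hr0.le)
              _ = r⁻¹ * Mx := mul_comm _ _
              _ ≤ K' * Mx := by
                  apply mul_le_mul_of_nonneg_right _ hMx0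
                  rwa [one_div] at hKr
            calc L * (r⁻¹ * dist (x:X) (y:X)) = L * r⁻¹ * dist (x:X) (y:X) := by ring
            _ ≤ K' * Mx * dist (x:X) (y:X) := mul_le_mul_of_nonneg_right hLr dist_nonneg
          calc |p.1.1 ⟨r⁻¹ • ((x:X) - a), hux⟩ + p.2 - (p.1.1 ⟨r⁻¹ • ((y:X) - a), huy⟩ + p.2)|
              = |p.1.1 ⟨r⁻¹ • ((x:X) - a), hux⟩ - p.1.1 ⟨r⁻¹ • ((y:X) - a), huy⟩| := by
                congr 1; ring
          _ ≤ L * (r⁻¹ * dist (x:X) (y:X)) := h1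
          _ ≤ K' * Mx * dist x y := hstep
    refine ⟨⟨fun x hx => (hS p x).2 hx, K' * Mx, mul_nonneg hK'0.le hMx0, hbound⟩, ?_⟩
    exact lip_le' (mul_nonneg hK'0.le hMx0) hbound
  · intro g₁ g₂ g₃ l₁ l₂ l₃ c hg hl x
    rcases hcases x with hx | hx
    · rw [(hS (g₃, l₃) x).2 hx, (hS (g₁, l₁) x).2 hx, (hS (g₂, l₂) x).2 hx]
      ring
    · have hu := hmem x hx
      rw [(hS (g₃, l₃) x).1 hu hx, (hS (g₁, l₁) x).1 hu hx, (hS (g₂, l₂) x).1 hu hx,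
        hg ⟨r⁻¹ • ((x:X) - a), hu⟩, hl]
      ring
end

section
/- Let M be a pointed metric space with base point 0, and let Γ be an infinite collection of subsets of M, each containing 0, directed by upward inclusion, such that ⋃_{N∈Γ} N is dense in M. Then Lip₀(M) is isometrically isomorphic to a 1-complemented subspace of (⊕_{N∈Γ} Lip₀(N))_{ℓ∞}: there exist linear operators T : Lip₀(M) → (⊕ Lip₀(N))_{ℓ∞} and S : (⊕ Lip₀(N))_{ℓ∞} → Lip₀(M), both of norm at most 1, with S ∘ T = Id. -/
open Filter Topology

open Classical in
/-- Ultralimit of a real family: the limit along the ultrafilter if it exists, else `0`. -/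
noncomputable def ulim {ι : Type*} (u : Ultrafilter ι) (f : ι → ℝ) : ℝ :=
  if h : ∃ c, Tendsto f ↑u (𝓝 c) then h.choose else 0

lemma ulim_eq {ι : Type*} (u : Ultrafilter ι) {f : ι → ℝ} {c : ℝ}
    (h : Tendsto f ↑u (𝓝 c)) : ulim u f = c := by
  have hex : ∃ c, Tendsto f ↑u (𝓝 c) := ⟨c, h⟩
  unfold ulim; rw [dif_pos hex]
  exact tendsto_nhds_unique hex.choose_spec h

lemma ulim_tendsto {ι : Type*} (u : Ultrafilter ι) {f : ι → ℝ}
    (h : ∃ c, Tendsto f ↑u (𝓝 c)) : Tendsto f ↑u (𝓝 (ulim u f)) := by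
  unfold ulim; rw [dif_pos h]; exact h.choose_spec

lemma exists_ulim {ι : Type*} (u : Ultrafilter ι) {f : ι → ℝ} {C : ℝ}
    (h : ∀ᶠ i in ↑u, |f i| ≤ C) : ∃ c, Tendsto f ↑u (𝓝 c) := by
  have hle : ↑(u.map f) ≤ 𝓟 (Set.Icc (-C) C) := by
    rw [le_principal_iff]
    exact Ultrafilter.mem_map.mpr (h.mono fun i hi => by
      simpa [Set.mem_Icc] using abs_le.mp hi)
  obtain ⟨a, -, ha⟩ := (isCompact_Icc (a := -C) (b := C)).ultrafilter_le_nhds (u.map f) hle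
  exact ⟨a, ha⟩

open Classical in
/-- Auxiliary: the family `G`, shifted to vanish at `z` and extended by `0` off `N`. -/
noncomputable def myGt {M : Type*} [MetricSpace M] (z : M) (Γ : Set (Set M))
    (hz : ∀ N ∈ Γ, z ∈ N) (G : ∀ N : Γ, ((N.1 : Set M) → ℝ)) (N : ↥Γ) (q : M) : ℝ :=
  if h : q ∈ N.1 then G N ⟨q, h⟩ - G N ⟨z, hz N.1 N.2⟩ else 0

/-- Auxiliary: the left inverse `S`, built from a double ultralimit. -/
noncomputable def myS {M : Type*} [MetricSpace M] (z : M) (Γ : Set (Set M))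
    (hz : ∀ N ∈ Γ, z ∈ N) (U : Ultrafilter ↥Γ) (V : Ultrafilter ℕ) (y : M → ℕ → M)
    (G : ∀ N : Γ, ((N.1 : Set M) → ℝ)) (x : M) : ℝ :=
  ulim V fun n => ulim U fun N => myGt z Γ hz G N (y x n)

/-- Lip₀(M) is a 1-complemented subspace of (⊕_{N∈Γ} Lip₀(N))_{ℓ∞}: the
restriction operator T (of norm ≤ 1) admits a left inverse S of norm ≤ 1. -/
theorem stmt11 {M : Type*} [MetricSpace M] (z : M) (Γ : Set (Set M))
    (hinf : Γ.Infinite) (hz : ∀ N ∈ Γ, z ∈ N)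
    (hdir : ∀ N₁ ∈ Γ, ∀ N₂ ∈ Γ, ∃ N₃ ∈ Γ, N₁ ⊆ N₃ ∧ N₂ ⊆ N₃)
    (hdense : Dense (⋃ N ∈ Γ, N)) :
    -- T(f) = (f|_N)_N has norm ≤ 1:
    (∀ f : M → ℝ, ∀ K : ℝ, 0 ≤ K → (∀ x y : M, |f x - f y| ≤ K * dist x y) →
      ∀ N : Γ, ∀ p q : (N.1 : Set M), |f p - f q| ≤ K * dist (p : M) (q : M)) ∧
    -- and there is a left inverse S of norm ≤ 1:
    ∃ S : (∀ N : Γ, ((N.1 : Set M) → ℝ)) → (M → ℝ),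
      -- S is linear (on bounded families):
      (∀ G H : ∀ N : Γ, ((N.1 : Set M) → ℝ), ∀ c : ℝ,
        (∃ K : ℝ, ∀ N : Γ, ∀ p q : (N.1 : Set M), |G N p - G N q| ≤ K * dist (p : M) (q : M)) →
        (∃ K : ℝ, ∀ N : Γ, ∀ p q : (N.1 : Set M), |H N p - H N q| ≤ K * dist (p : M) (q : M)) →
        ∀ x : M, S (fun N p => c * G N p + H N p) x = c * S G x + S H x) ∧
      -- ‖S‖ ≤ 1:
      (∀ G : ∀ N : Γ, ((N.1 : Set M) → ℝ), ∀ K : ℝ, 0 ≤ K →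
        (∀ N : Γ, ∀ p : (N.1 : Set M), (p : M) = z → G N p = 0) →
        (∀ N : Γ, ∀ p q : (N.1 : Set M), |G N p - G N q| ≤ K * dist (p : M) (q : M)) →
        S G z = 0 ∧ ∀ x y : M, |S G x - S G y| ≤ K * dist x y) ∧
      -- S ∘ T = Id on Lip₀(M):
      (∀ f : M → ℝ, f z = 0 →
        (∃ K : ℝ, 0 ≤ K ∧ ∀ x y : M, |f x - f y| ≤ K * dist x y) →
        S (fun N p => f (p : M)) = f) := by
  classical
  refine ⟨fun f K _ h N p q => h p q, ?_⟩
  haveI hΓne : Nonempty ↥Γ := hinf.nonempty.to_subtype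
  set D : Set M := ⋃ N ∈ Γ, N with hDdef
  -- approximating points from the dense union
  have hy : ∀ x : M, ∀ n : ℕ, ∃ p ∈ D, dist x p < 1 / (n + 1) := by
    intro x n
    exact Metric.mem_closure_iff.mp (hdense x) _ (by positivity)
  choose y hyD hyd using hy
  -- the directed filter on Γ and an ultrafilter refining it
  set F : Filter ↥Γ := ⨅ N₀ : ↥Γ, 𝓟 {N : ↥Γ | (N₀ : Set M) ⊆ N.1} with hFdef
  have hFne : F.NeBot := by
    apply iInf_neBot_of_directed'
    · intro A B
      obtain ⟨C, hC, h1, h2⟩ := hdir A.1 A.2 B.1 B.2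
      refine ⟨⟨C, hC⟩, ?_, ?_⟩ <;>
        · simp only [le_principal_iff, mem_principal]
          intro N hN
          first
            | exact h1.trans hN
            | exact h2.trans hN
    · intro N₀
      exact principal_neBot_iff.mpr ⟨N₀, fun a ha => ha⟩
  let U : Ultrafilter ↥Γ := Ultrafilter.of F
  have hUF : ↑U ≤ F := Ultrafilter.of_le F
  have hUmem : ∀ q ∈ D, ∀ᶠ N : ↥Γ in ↑U, q ∈ N.1 := by
    intro q hq
    rw [hDdef] at hq
    simp only [Set.mem_iUnion] at hq
    obtain ⟨N₀, hN₀, hqN₀⟩ := hq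
    have hmem : {N : ↥Γ | (N₀ : Set M) ⊆ N.1} ∈ F := by
      rw [hFdef]
      exact mem_iInf_of_mem ⟨N₀, hN₀⟩ (mem_principal_self _)
    exact Filter.mem_of_superset (hUF hmem) fun N hN => hN hqN₀
  let V : Ultrafilter ℕ := hyperfilter ℕ
  have hV : ↑V ≤ (atTop : Filter ℕ) := Nat.hyperfilter_le_atTop
  -- key facts about the inner ultralimit
  have key : ∀ (G : ∀ N : Γ, ((N.1 : Set M) → ℝ)) (K : ℝ),
      (∀ N : Γ, ∀ p q : (N.1 : Set M), |G N p - G N q| ≤ K * dist (p : M) (q : M)) →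
      ∀ q ∈ D, Tendsto (fun N => myGt z Γ hz G N q) ↑U
          (𝓝 (ulim U fun N => myGt z Γ hz G N q)) ∧
        |ulim U fun N => myGt z Γ hz G N q| ≤ K * dist q z := by
    intro G K hlip q hq
    have hb : ∀ᶠ N : ↥Γ in ↑U, |myGt z Γ hz G N q| ≤ K * dist q z :=
      (hUmem q hq).mono fun N hN => by
        simp only [myGt, dif_pos hN]
        exact hlip N ⟨q, hN⟩ ⟨z, hz N.1 N.2⟩
    have hex := exists_ulim U hb
    have ht := ulim_tendsto U hex
    exact ⟨ht, le_of_tendsto ht.abs hb⟩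
  have keyd : ∀ (G : ∀ N : Γ, ((N.1 : Set M) → ℝ)) (K : ℝ),
      (∀ N : Γ, ∀ p q : (N.1 : Set M), |G N p - G N q| ≤ K * dist (p : M) (q : M)) →
      ∀ q ∈ D, ∀ q' ∈ D,
        |(ulim U fun N => myGt z Γ hz G N q) - ulim U fun N => myGt z Γ hz G N q'|
          ≤ K * dist q q' := by
    intro G K hlip q hq q' hq'
    have h1 := (key G K hlip q hq).1
    have h2 := (key G K hlip q' hq').1
    refine le_of_tendsto (h1.sub h2).abs ?_
    filter_upwards [hUmem q hq, hUmem q' hq'] with N hN hN'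
    simp only [myGt, dif_pos hN, dif_pos hN', sub_sub_sub_cancel_right]
    exact hlip N ⟨q, hN⟩ ⟨q', hN'⟩
  refine ⟨myS z Γ hz U V y, ?_, ?_, ?_⟩
  · -- linearity
    rintro G H c ⟨KG, hG⟩ ⟨KH, hH⟩ x
    have hGt : ∀ (N : ↥Γ) (q : M),
        myGt z Γ hz (fun N p => c * G N p + H N p) N q
          = c * myGt z Γ hz G N q + myGt z Γ hz H N q := by
      intro N q
      by_cases h : q ∈ (N : Set M)
      · simp only [myGt, dif_pos h]; ring
      · simp only [myGt, dif_neg h]; ring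
    have hinner : ∀ n : ℕ,
        (ulim U fun N => myGt z Γ hz (fun N p => c * G N p + H N p) N (y x n))
          = c * (ulim U fun N => myGt z Γ hz G N (y x n))
            + ulim U fun N => myGt z Γ hz H N (y x n) := by
      intro n
      have tG := (key G KG hG (y x n) (hyD x n)).1
      have tH := (key H KH hH (y x n) (hyD x n)).1
      have : Tendsto (fun N => myGt z Γ hz (fun N p => c * G N p + H N p) N (y x n)) ↑U
          (𝓝 (c * (ulim U fun N => myGt z Γ hz G N (y x n))
            + ulim U fun N => myGt z Γ hz H N (y x n))) := by
        have := (tG.const_mul c).add tH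
        refine this.congr fun N => ?_
        rw [hGt]
      exact ulim_eq U this
    -- outer limits exist
    have hboundG : ∀ n : ℕ, |ulim U fun N => myGt z Γ hz G N (y x n)|
        ≤ |KG| * (1 + dist x z) := by
      intro n
      refine ((key G KG hG (y x n) (hyD x n)).2.trans ?_)
      have h1 : dist (y x n) z ≤ 1 + dist x z := by
        have := dist_triangle (y x n) x z
        have h2 := hyd x n
        have h3 : (1 : ℝ) / (n + 1) ≤ 1 := by
          rw [div_le_one (by positivity)]; simp
        rw [dist_comm (y x n) x] at this
        linarith
      calc KG * dist (y x n) z ≤ |KG| * dist (y x n) z :=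
            mul_le_mul_of_nonneg_right (le_abs_self KG) dist_nonneg
        _ ≤ |KG| * (1 + dist x z) := by
            exact mul_le_mul_of_nonneg_left h1 (abs_nonneg KG)
    have hboundH : ∀ n : ℕ, |ulim U fun N => myGt z Γ hz H N (y x n)|
        ≤ |KH| * (1 + dist x z) := by
      intro n
      refine ((key H KH hH (y x n) (hyD x n)).2.trans ?_)
      have h1 : dist (y x n) z ≤ 1 + dist x z := by
        have := dist_triangle (y x n) x z
        have h2 := hyd x n
        have h3 : (1 : ℝ) / (n + 1) ≤ 1 := by
          rw [div_le_one (by positivity)]; simp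
        rw [dist_comm (y x n) x] at this
        linarith
      calc KH * dist (y x n) z ≤ |KH| * dist (y x n) z :=
            mul_le_mul_of_nonneg_right (le_abs_self KH) dist_nonneg
        _ ≤ |KH| * (1 + dist x z) := by
            exact mul_le_mul_of_nonneg_left h1 (abs_nonneg KH)
    have hexG := exists_ulim V (Eventually.of_forall hboundG)
    have hexH := exists_ulim V (Eventually.of_forall hboundH)
    have tG := ulim_tendsto V hexG
    have tH := ulim_tendsto V hexH
    have : Tendsto (fun n => ulim U fun N =>
        myGt z Γ hz (fun N p => c * G N p + H N p) N (y x n)) ↑V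
        (𝓝 (c * myS z Γ hz U V y G x + myS z Γ hz U V y H x)) := by
      have := (tG.const_mul c).add tH
      refine this.congr fun n => ?_
      rw [hinner]
    exact ulim_eq V this
  · -- norm ≤ 1
    intro G K hK _ hlip
    have hbu : ∀ (x : M) (n : ℕ), |ulim U fun N => myGt z Γ hz G N (y x n)|
        ≤ K * dist (y x n) z := fun x n => (key G K hlip (y x n) (hyD x n)).2
    have houter : ∀ x : M, ∃ c, Tendsto (fun n => ulim U fun N => myGt z Γ hz G N (y x n))
        ↑V (𝓝 c) := by
      intro x
      refine exists_ulim V (C := K * (1 + dist x z)) (Eventually.of_forall fun n => (hbu x n).trans ?_)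
      have h1 : dist (y x n) z ≤ 1 + dist x z := by
        have := dist_triangle (y x n) x z
        have h2 := hyd x n
        have h3 : (1 : ℝ) / (n + 1) ≤ 1 := by
          rw [div_le_one (by positivity)]; simp
        rw [dist_comm (y x n) x] at this
        linarith
      exact mul_le_mul_of_nonneg_left h1 hK
    constructor
    · -- S G z = 0
      have hzero : Tendsto (fun n => ulim U fun N => myGt z Γ hz G N (y z n)) atTop (𝓝 0) := by
        have hgl : Tendsto (fun n : ℕ => K * (1 / (n + 1))) atTop (𝓝 0) := by
          simpa using tendsto_one_div_add_atTop_nhds_zero_nat.const_mul K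
        refine squeeze_zero_norm (fun n => ?_) hgl
        rw [Real.norm_eq_abs]
        refine (hbu z n).trans ?_
        rw [dist_comm (y z n) z]
        exact mul_le_mul_of_nonneg_left (hyd z n).le hK
      exact ulim_eq V (hzero.mono_left hV)
    · -- Lipschitz bound
      intro x x'
      have h1 : Tendsto (fun n => (ulim U fun N => myGt z Γ hz G N (y x n))
            - ulim U fun N => myGt z Γ hz G N (y x' n)) ↑V
          (𝓝 (myS z Γ hz U V y G x - myS z Γ hz U V y G x')) :=
        (ulim_tendsto V (houter x)).sub (ulim_tendsto V (houter x'))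
      have hd : ∀ n : ℕ, |(ulim U fun N => myGt z Γ hz G N (y x n))
            - ulim U fun N => myGt z Γ hz G N (y x' n)|
          ≤ K * (dist x x' + (1 / (n + 1) + 1 / (n + 1))) := by
        intro n
        refine (keyd G K hlip (y x n) (hyD x n) (y x' n) (hyD x' n)).trans ?_
        have t1 := dist_triangle (y x n) x (y x' n)
        have t2 := dist_triangle x x' (y x' n)
        have h2 := hyd x n
        have h3 := hyd x' n
        rw [dist_comm (y x n) x] at t1
        refine mul_le_mul_of_nonneg_left ?_ hK
        linarith
      have h2 : Tendsto (fun n : ℕ => K * (dist x x' + (1 / (n + 1) + 1 / (n + 1)))) ↑V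
          (𝓝 (K * dist x x')) := by
        have hh : Tendsto (fun n : ℕ => (1 : ℝ) / (n + 1)) atTop (𝓝 0) :=
          tendsto_one_div_add_atTop_nhds_zero_nat
        have : Tendsto (fun n : ℕ => K * (dist x x' + (1 / (n + 1) + 1 / (n + 1)))) atTop
            (𝓝 (K * (dist x x' + (0 + 0)))) :=
          ((tendsto_const_nhds.add (hh.add hh)).const_mul K)
        simpa using this.mono_left hV
      exact le_of_tendsto_of_tendsto' h1.abs h2 hd
  · -- S ∘ T = id
    rintro f hf0 ⟨K, hK, hlip⟩
    funext x
    have hinner : ∀ n : ℕ,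
        (ulim U fun N => myGt z Γ hz (fun N p => f (p : M)) N (y x n)) = f (y x n) := by
      intro n
      refine ulim_eq U (Tendsto.congr' ?_ (tendsto_const_nhds : Tendsto _ (↑U : Filter ↥Γ) (𝓝 (f (y x n)))))
      filter_upwards [hUmem (y x n) (hyD x n)] with N hN
      simp only [myGt, dif_pos hN, hf0, sub_zero]
    have : Tendsto (fun n => ulim U fun N => myGt z Γ hz (fun N p => f (p : M)) N (y x n))
        atTop (𝓝 (f x)) := by
      simp only [hinner]
      have hzero : Tendsto (fun n => f (y x n) - f x) atTop (𝓝 0) := by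
        have hgl : Tendsto (fun n : ℕ => K * (1 / (n + 1))) atTop (𝓝 0) := by
          simpa using tendsto_one_div_add_atTop_nhds_zero_nat.const_mul K
        refine squeeze_zero_norm (fun n => ?_) hgl
        rw [Real.norm_eq_abs]
        refine (hlip (y x n) x).trans ?_
        rw [dist_comm (y x n) x]
        exact mul_le_mul_of_nonneg_left (hyd x n).le hK
      simpa using hzero.add (tendsto_const_nhds (x := f x))
    exact ulim_eq V (this.mono_left hV)
end

section
/- Let X be a Banach space, 0 < r < s, and let A ⊆ B_X be an s-packing of the unit ball containing the origin. Set N = ⋃_{a∈A} B[a,r], a pointed metric subspace of B_X with base point 0. Then there exists a bounded linear extension operator E : Lip₀(N) → Lip₀(B_X) with E(f)|_N = f for all f and ‖E‖ ≤ (4s - 2r + 1)/(s - r). -/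
open Metric

section Aux

variable {X : Type*} [NormedAddCommGroup X] [NormedSpace ℝ X]

noncomputable def retr (r : ℝ) (a x : X) : X := a + (min 1 (r / ‖x - a‖)) • (x - a)

noncomputable def gam (r s : ℝ) (a x : X) : ℝ := min 1 ((s - dist x a) / (s - r))

lemma proj_eq_self {r : ℝ} (hr : 0 < r) {w : X} (h : ‖w‖ ≤ r) :
    (min 1 (r / ‖w‖)) • w = w := by
  rcases eq_or_ne w 0 with rfl | hw
  · simp
  · have hn : 0 < ‖w‖ := norm_pos_iff.2 hw
    have h1 : (1:ℝ) ≤ r / ‖w‖ := (le_div_iff₀ hn).2 (by linarith)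
    rw [min_eq_left h1, one_smul]

lemma proj_lip_aux {r : ℝ} (hr : 0 < r) {u v : X} (huv : ‖u‖ ≤ ‖v‖) :
    ‖(min 1 (r / ‖u‖)) • u - (min 1 (r / ‖v‖)) • v‖ ≤ 2 * ‖u - v‖ := by
  have hnn : ‖v‖ - ‖u‖ ≤ ‖u - v‖ := by
    have := norm_sub_norm_le v u
    rwa [norm_sub_rev] at this
  rcases le_or_gt ‖v‖ r with hm | hm
  · rw [proj_eq_self hr (le_trans huv hm), proj_eq_self hr hm]
    have := norm_nonneg (u - v); linarith
  · have hv0 : 0 < ‖v‖ := lt_trans hr hm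
    have hPv : min 1 (r / ‖v‖) = r / ‖v‖ := min_eq_right ((div_le_one hv0).2 hm.le)
    rcases le_or_gt ‖u‖ r with hn | hn
    · rw [proj_eq_self hr hn, hPv]
      have e1 : u - (r / ‖v‖) • v = (u - v) + (v - (r / ‖v‖) • v) := by abel
      have e2 : ‖v - (r / ‖v‖) • v‖ = ‖v‖ - r := by
        have e3 : v - (r / ‖v‖) • v = (1 - r / ‖v‖) • v := by
          rw [sub_smul, one_smul]
        rw [e3, norm_smul, Real.norm_eq_abs,
          abs_of_nonneg (by rw [sub_nonneg]; exact (div_le_one hv0).2 hm.le)]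
        field_simp
      calc ‖u - (r / ‖v‖) • v‖ ≤ ‖u - v‖ + ‖v - (r / ‖v‖) • v‖ := by
            rw [e1]; exact norm_add_le _ _
        _ = ‖u - v‖ + (‖v‖ - r) := by rw [e2]
        _ ≤ 2 * ‖u - v‖ := by linarith
    · have hu0 : 0 < ‖u‖ := lt_trans hr hn
      rw [min_eq_right ((div_le_one hu0).2 hn.le), hPv]
      have e1 : (r / ‖u‖) • u - (r / ‖v‖) • v
          = (r / ‖u‖) • (u - v) + (r / ‖u‖ - r / ‖v‖) • v := by
        rw [smul_sub, sub_smul]; abel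
      have h2 : ‖(r / ‖u‖) • (u - v)‖ = (r / ‖u‖) * ‖u - v‖ := by
        rw [norm_smul, Real.norm_eq_abs, abs_of_nonneg (by positivity)]
      have h3 : ‖(r / ‖u‖ - r / ‖v‖) • v‖ = (r / ‖u‖ - r / ‖v‖) * ‖v‖ := by
        rw [norm_smul, Real.norm_eq_abs, abs_of_nonneg ?_]
        rw [sub_nonneg]
        exact div_le_div_of_nonneg_left hr.le hu0 huv
      have h4 : (r / ‖u‖ - r / ‖v‖) * ‖v‖ = (r / ‖u‖) * (‖v‖ - ‖u‖) := by
        field_simp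
      have h5 : (r / ‖u‖) * (‖v‖ - ‖u‖) ≤ (r / ‖u‖) * ‖u - v‖ :=
        mul_le_mul_of_nonneg_left hnn (by positivity)
      have h6 : r / ‖u‖ ≤ 1 := (div_le_one hu0).2 hn.le
      have h7 : (0:ℝ) ≤ ‖u - v‖ := norm_nonneg _
      calc ‖(r / ‖u‖) • u - (r / ‖v‖) • v‖
          ≤ ‖(r / ‖u‖) • (u - v)‖ + ‖(r / ‖u‖ - r / ‖v‖) • v‖ := by
            rw [e1]; exact norm_add_le _ _
        _ ≤ (r / ‖u‖) * ‖u - v‖ + (r / ‖u‖) * ‖u - v‖ := by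
            rw [h2, h3, h4]; linarith
        _ ≤ 2 * ‖u - v‖ := by nlinarith

lemma retr_dist {r : ℝ} (hr : 0 < r) (a x : X) : dist (retr r a x) a ≤ r := by
  have : retr r a x - a = (min 1 (r / ‖x - a‖)) • (x - a) := by
    rw [retr]; abel
  rw [dist_eq_norm, this, norm_smul, Real.norm_eq_abs]
  rcases eq_or_lt_of_le (norm_nonneg (x - a)) with h0 | h0
  · rw [← h0]; simpa using hr.le
  · have hc : min 1 (r / ‖x - a‖) ≤ r / ‖x - a‖ := min_le_right _ _
    have hc0 : 0 ≤ min 1 (r / ‖x - a‖) := le_min zero_le_one (by positivity)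
    rw [abs_of_nonneg hc0]
    calc min 1 (r / ‖x - a‖) * ‖x - a‖ ≤ (r / ‖x - a‖) * ‖x - a‖ :=
          mul_le_mul_of_nonneg_right hc (norm_nonneg _)
      _ = r := by field_simp

lemma retr_eq_self {r : ℝ} (hr : 0 < r) {a x : X} (h : dist x a ≤ r) : retr r a x = x := by
  rw [retr, proj_eq_self hr (by rwa [← dist_eq_norm])]
  abel

lemma retr_lip {r : ℝ} (hr : 0 < r) (a x y : X) :
    dist (retr r a x) (retr r a y) ≤ 2 * dist x y := by
  have e : dist (retr r a x) (retr r a y)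
      = ‖(min 1 (r / ‖x - a‖)) • (x - a) - (min 1 (r / ‖y - a‖)) • (y - a)‖ := by
    rw [retr, retr, dist_eq_norm]
    congr 1; abel
  have e2 : ‖(x - a) - (y - a)‖ = dist x y := by
    rw [dist_eq_norm]; congr 1; abel
  rcases le_total ‖x - a‖ ‖y - a‖ with h | h
  · rw [e, ← e2]; exact proj_lip_aux hr h
  · have e3 : ‖(y - a) - (x - a)‖ = dist x y := by
      rw [dist_comm x y, dist_eq_norm]; congr 1; abel
    calc dist (retr r a x) (retr r a y)
        = ‖(min 1 (r / ‖y - a‖)) • (y - a) - (min 1 (r / ‖x - a‖)) • (x - a)‖ := by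
          rw [e, norm_sub_rev]
      _ ≤ 2 * ‖(y - a) - (x - a)‖ := proj_lip_aux hr h
      _ = 2 * dist x y := by rw [e3]

lemma gam_nonneg {r s : ℝ} (hrs : r < s) {a x : X} (h : dist x a ≤ s) :
    0 ≤ gam r s a x :=
  le_min zero_le_one (div_nonneg (by linarith) (by linarith))

lemma gam_le_one {r s : ℝ} (a x : X) : gam r s a x ≤ 1 := min_le_left _ _

lemma gam_le {r s : ℝ} (a x : X) : gam r s a x ≤ (s - dist x a) / (s - r) :=
  min_le_right _ _

lemma gam_eq_one {r s : ℝ} (hrs : r < s) {a x : X} (h : dist x a ≤ r) :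
    gam r s a x = 1 := by
  apply min_eq_left
  rw [le_div_iff₀ (by linarith)]
  linarith

lemma gam_lip {r s : ℝ} (hrs : r < s) (a x y : X) :
    |gam r s a x - gam r s a y| ≤ dist x y / (s - r) := by
  refine (abs_min_sub_min_le_max _ _ _ _).trans ?_
  simp only [sub_self, abs_zero]
  rw [max_le_iff]
  constructor
  · exact div_nonneg dist_nonneg (by linarith)
  · rw [div_sub_div_same, abs_div, abs_of_pos (by linarith : (0:ℝ) < s - r)]
    apply div_le_div_of_nonneg_right ?_ (by linarith)
    have : s - dist x a - (s - dist y a) = dist y a - dist x a := by ring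
    rw [this]
    exact (abs_dist_sub_le y x a).trans (by rw [dist_comm])

open Classical in
noncomputable def Eop (A : Set X) (r s : ℝ) (f : X → ℝ) (x : X) : ℝ :=
  if h : ∃ a ∈ A, dist x a < s then gam r s h.choose x * f (retr r h.choose x) else 0

lemma Eop_eq {A : Set X} {r s : ℝ}
    (hpack₂ : ∀ a ∈ A, ∀ a' ∈ A, a ≠ a' → Disjoint (ball a s) (ball a' s))
    (f : X → ℝ) {a x : X} (ha : a ∈ A) (hx : dist x a < s) :
    Eop A r s f x = gam r s a x * f (retr r a x) := by
  have h : ∃ b ∈ A, dist x b < s := ⟨a, ha, hx⟩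
  have hb := h.choose_spec
  have hba : h.choose = a := by
    by_contra hne
    exact Set.disjoint_left.1 (hpack₂ _ hb.1 _ ha hne) (mem_ball.2 hb.2) (mem_ball.2 hx)
  simp only [Eop]
  rw [dif_pos h, hba]

lemma Eop_eq_zero {A : Set X} {r s : ℝ} (f : X → ℝ) {x : X}
    (hx : ¬ ∃ a ∈ A, dist x a < s) : Eop A r s f x = 0 := by
  simp only [Eop]
  rw [dif_neg hx]

end Aux

/-- Existence of a bounded linear extension operator
E : Lip₀(N) → Lip₀(B_X), where N = ⋃_{a∈A} B[a,r] for an s-packing A of the unit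
ball containing 0, with ‖E‖ ≤ (4s - 2r + 1)/(s - r). -/
theorem stmt14 {X : Type*} [NormedAddCommGroup X] [NormedSpace ℝ X] [CompleteSpace X]
    (r s : ℝ) (hr : 0 < r) (hrs : r < s)
    (A : Set X) (h0A : (0 : X) ∈ A)
    (hpack₁ : ∀ a ∈ A, closedBall a s ⊆ closedBall (0 : X) 1)
    (hpack₂ : ∀ a ∈ A, ∀ a' ∈ A, a ≠ a' → Disjoint (ball a s) (ball a' s))
    (N Bx : Set X) (hN : N = ⋃ a ∈ A, closedBall a r) (hBx : Bx = closedBall (0 : X) 1) :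
    ∃ E : (X → ℝ) → (X → ℝ),
      -- E f depends only on the restriction of f to N:
      (∀ f g : X → ℝ, (∀ x ∈ N, f x = g x) → ∀ x ∈ Bx, E f x = E g x) ∧
      -- E is linear:
      (∀ f g : X → ℝ, ∀ c : ℝ, ∀ x ∈ Bx,
        E (fun y => c * f y + g y) x = c * E f x + E g x) ∧
      -- E is an extension operator:
      (∀ f : X → ℝ, ∀ x ∈ N, E f x = f x) ∧
      -- norm bound ‖E‖ ≤ (4s - 2r + 1)/(s - r):
      (∀ f : X → ℝ, ∀ K : ℝ, 0 ≤ K → f 0 = 0 →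
        (∀ x ∈ N, ∀ y ∈ N, |f x - f y| ≤ K * dist x y) →
        E f 0 = 0 ∧ ∀ x ∈ Bx, ∀ y ∈ Bx,
          |E f x - E f y| ≤ (4 * s - 2 * r + 1) / (s - r) * K * dist x y) := by
  classical
  have hL : (0:ℝ) < s - r := by linarith
  have hNmem : ∀ a ∈ A, ∀ x : X, retr r a x ∈ N := by
    intro a ha x
    rw [hN]
    exact Set.mem_iUnion₂.2 ⟨a, ha, mem_closedBall.2 (retr_dist hr a x)⟩
  have h0N : (0:X) ∈ N := by
    rw [hN]
    exact Set.mem_iUnion₂.2 ⟨0, h0A, by simp [hr.le]⟩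
  have hnorm : ∀ a ∈ A, ∀ x : X, dist (retr r a x) 0 ≤ 1 := by
    intro a ha x
    exact mem_closedBall.1 (hpack₁ a ha (mem_closedBall.2 ((retr_dist hr a x).trans hrs.le)))
  have hext : ∀ f : X → ℝ, ∀ x ∈ N, Eop A r s f x = f x := by
    intro f x hx
    rw [hN] at hx
    obtain ⟨a, ha, hxa⟩ := Set.mem_iUnion₂.1 hx
    have hd : dist x a ≤ r := mem_closedBall.1 hxa
    rw [Eop_eq hpack₂ f ha (lt_of_le_of_lt hd hrs), gam_eq_one hrs hd,
      retr_eq_self hr hd, one_mul]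
  refine ⟨Eop A r s, ?_, ?_, hext, ?_⟩
  · -- locality
    intro f g hfg x _
    rcases em (∃ a ∈ A, dist x a < s) with ⟨a, ha, hxa⟩ | hx
    · rw [Eop_eq hpack₂ f ha hxa, Eop_eq hpack₂ g ha hxa, hfg _ (hNmem a ha x)]
    · rw [Eop_eq_zero f hx, Eop_eq_zero g hx]
  · -- linearity
    intro f g c x _
    rcases em (∃ a ∈ A, dist x a < s) with ⟨a, ha, hxa⟩ | hx
    · rw [Eop_eq hpack₂ _ ha hxa, Eop_eq hpack₂ f ha hxa, Eop_eq hpack₂ g ha hxa]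
      ring
    · rw [Eop_eq_zero _ hx, Eop_eq_zero f hx, Eop_eq_zero g hx]
      ring
  · -- norm bound
    intro f K hK hf0 hflip
    have fbd : ∀ a ∈ A, ∀ x : X, |f (retr r a x)| ≤ K := by
      intro a ha x
      have h1 := hflip _ (hNmem a ha x) _ h0N
      rw [hf0, sub_zero] at h1
      calc |f (retr r a x)| ≤ K * dist (retr r a x) 0 := h1
        _ ≤ K * 1 := mul_le_mul_of_nonneg_left (hnorm a ha x) hK
        _ = K := mul_one K
    have hEabs : ∀ a ∈ A, ∀ x : X, dist x a < s →
        |Eop A r s f x| ≤ (s - dist x a) / (s - r) * K := by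
      intro a ha x hxa
      rw [Eop_eq hpack₂ f ha hxa, abs_mul, abs_of_nonneg (gam_nonneg hrs hxa.le)]
      exact mul_le_mul (gam_le a x) (fbd a ha x) (abs_nonneg _)
        (div_nonneg (by linarith) hL.le)
    have hsep : ∀ a ∈ A, ∀ a' ∈ A, a ≠ a' → 2 * s ≤ dist a a' := by
      intro a ha a' ha' hne
      by_contra hlt
      push_neg at hlt
      have hm : ((1:ℝ)/2) • (a + a') ∈ ball a s ∩ ball a' s := by
        constructor
        · rw [mem_ball, dist_eq_norm]
          have e : ((1:ℝ)/2) • (a + a') - a = ((1:ℝ)/2) • (a' - a) := by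
            module
          rw [e, norm_smul]
          have : ‖a' - a‖ = dist a a' := by rw [dist_eq_norm, norm_sub_rev]
          rw [this]
          simp only [Real.norm_eq_abs]
          rw [abs_of_nonneg (by norm_num : (0:ℝ) ≤ 1/2)]
          linarith
        · rw [mem_ball, dist_eq_norm]
          have e : ((1:ℝ)/2) • (a + a') - a' = ((1:ℝ)/2) • (a - a') := by
            module
          rw [e, norm_smul]
          have : ‖a - a'‖ = dist a a' := by rw [dist_eq_norm]
          rw [this]
          simp only [Real.norm_eq_abs]
          rw [abs_of_nonneg (by norm_num : (0:ℝ) ≤ 1/2)]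
          linarith
      exact Set.disjoint_left.1 (hpack₂ a ha a' ha' hne) hm.1 hm.2
    constructor
    · rw [hext f 0 h0N, hf0]
    intro x _ y _
    have conv : ∀ x y : X, dist x y / (s - r) * K ≤ (1/(s-r) + 2) * (K * dist x y) := by
      intro x y
      have h1 : (0:ℝ) ≤ K * dist x y := mul_nonneg hK dist_nonneg
      have e : dist x y / (s - r) * K = 1/(s-r) * (K * dist x y) := by ring
      rw [e]
      nlinarith
    have hone : ∀ x y : X, (¬ ∃ a ∈ A, dist y a < s) →
        |Eop A r s f x - Eop A r s f y| ≤ dist x y / (s - r) * K := by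
      intro x y hy
      rw [Eop_eq_zero f hy, sub_zero]
      rcases em (∃ a ∈ A, dist x a < s) with ⟨a, ha, hxa⟩ | hx
      · have h1 := hEabs a ha x hxa
        have h2 : s ≤ dist y a := le_of_not_gt (fun h => hy ⟨a, ha, h⟩)
        have h3 : s - dist x a ≤ dist x y := by
          have t := dist_triangle y x a
          rw [dist_comm y x] at t
          linarith
        refine h1.trans ?_
        gcongr
      · rw [Eop_eq_zero f hx, abs_zero]
        exact mul_nonneg (div_nonneg dist_nonneg hL.le) hK
    have key : ∀ x y : X,
        |Eop A r s f x - Eop A r s f y| ≤ (1/(s-r) + 2) * (K * dist x y) := by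
      intro x y
      rcases em (∃ a ∈ A, dist y a < s) with ⟨a', ha', hya⟩ | hy
      · rcases em (∃ a ∈ A, dist x a < s) with ⟨a, ha, hxa⟩ | hx
        · by_cases hae : a = a'
          · subst hae
            rw [Eop_eq hpack₂ f ha hxa, Eop_eq hpack₂ f ha hya]
            set p := gam r s a x with hp
            set q := gam r s a y with hq
            set u := f (retr r a x) with hu
            set v := f (retr r a y) with hv
            have h1 : |p - q| ≤ dist x y / (s - r) := gam_lip hrs a x y
            have h2 : |u| ≤ K := fbd a ha x
            have h3 : |u - v| ≤ K * (2 * dist x y) := by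
              refine (hflip _ (hNmem a ha x) _ (hNmem a ha y)).trans ?_
              exact mul_le_mul_of_nonneg_left (retr_lip hr a x y) hK
            have hq0 : 0 ≤ q := gam_nonneg hrs hya.le
            have hq1 : q ≤ 1 := gam_le_one a y
            have e : p * u - q * v = (p - q) * u + q * (u - v) := by ring
            calc |p * u - q * v| ≤ |(p - q) * u| + |q * (u - v)| := by
                  rw [e]; exact abs_add_le _ _
              _ = |p - q| * |u| + q * |u - v| := by
                  rw [abs_mul, abs_mul, abs_of_nonneg hq0]
              _ ≤ (dist x y / (s - r)) * K + 1 * (K * (2 * dist x y)) :=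
                  add_le_add
                    (mul_le_mul h1 h2 (abs_nonneg _) (div_nonneg dist_nonneg hL.le))
                    (mul_le_mul hq1 h3 (abs_nonneg _) zero_le_one)
              _ = (1/(s-r) + 2) * (K * dist x y) := by ring
          · have h2s := hsep a ha a' ha' hae
            have hd : (s - dist x a) + (s - dist y a') ≤ dist x y := by
              have t1 := dist_triangle a x a'
              have t2 := dist_triangle x y a'
              rw [dist_comm a x] at t1
              linarith
            calc |Eop A r s f x - Eop A r s f y|
                ≤ |Eop A r s f x| + |Eop A r s f y| := abs_sub _ _
              _ ≤ (s - dist x a) / (s - r) * K + (s - dist y a') / (s - r) * K :=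
                  add_le_add (hEabs a ha x hxa) (hEabs a' ha' y hya)
              _ = ((s - dist x a) + (s - dist y a')) / (s - r) * K := by ring
              _ ≤ dist x y / (s - r) * K := by gcongr
              _ ≤ (1/(s-r) + 2) * (K * dist x y) := conv x y
        · rw [abs_sub_comm]
          refine (hone y x hx).trans ?_
          rw [dist_comm y x]
          exact conv x y
      · exact (hone x y hy).trans (conv x y)
    refine (key x y).trans ?_
    have hC : (1/(s-r) + 2) ≤ (4*s - 2*r + 1) / (s - r) := by
      rw [le_div_iff₀ hL]
      have e : (1/(s-r) + 2) * (s - r) = 2*s - 2*r + 1 := by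
        field_simp
        ring
      rw [e]
      linarith
    have e2 : (4*s - 2*r + 1) / (s - r) * K * dist x y
        = (4*s - 2*r + 1) / (s - r) * (K * dist x y) := by ring
    rw [e2]
    exact mul_le_mul_of_nonneg_right hC (mul_nonneg hK dist_nonneg)
end

section
/- Let X be a Banach space, 0 < r < s, let A be an s-packing of B_X containing 0, and let γ_a and h_a be as in the extension construction. For f ∈ Lip₀(⋃_{a∈A} B[a,r]) and x, y ∈ B[a,s] for the same a ∈ A, one has |γ_a(x)f(h_a(x)) - γ_a(y)f(h_a(y))| ≤ ‖f‖_Lip · ((4s - 2r + 1)/(s - r)) · ‖x - y‖. -/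
open Metric

lemma rad_aux {X : Type*} [NormedAddCommGroup X] [NormedSpace ℝ X] {r : ℝ} (hr : 0 < r)
    {u v : X} (huv : ‖u‖ ≤ ‖v‖) :
    ‖(if ‖u‖ ≤ r then u else (r/‖u‖) • u) - (if ‖v‖ ≤ r then v else (r/‖v‖) • v)‖
      ≤ 2 * ‖u - v‖ := by
  have hnn : (0:ℝ) ≤ ‖u - v‖ := norm_nonneg _
  have hvu : ‖v‖ - ‖u‖ ≤ ‖u - v‖ := by
    have := norm_sub_norm_le v u
    rwa [norm_sub_rev] at this
  by_cases hv : ‖v‖ ≤ r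
  · have hu : ‖u‖ ≤ r := le_trans huv hv
    simp only [if_pos hu, if_pos hv]
    linarith
  · push_neg at hv
    have hv0 : (0:ℝ) < ‖v‖ := lt_trans hr hv
    rw [if_neg (not_le.mpr hv)]
    by_cases hu : ‖u‖ ≤ r
    · rw [if_pos hu]
      have key : u - (r/‖v‖) • v = (1 - r/‖v‖) • u + (r/‖v‖) • (u - v) := by
        rw [smul_sub, sub_smul, one_smul]; abel
      have h1 : ‖(1 - r/‖v‖) • u‖ = (1 - r/‖v‖) * ‖u‖ := by
        rw [norm_smul, Real.norm_eq_abs, abs_of_nonneg]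
        have : r/‖v‖ ≤ 1 := (div_le_one hv0).mpr hv.le
        linarith
      have h2 : ‖(r/‖v‖) • (u - v)‖ = (r/‖v‖) * ‖u - v‖ := by
        rw [norm_smul, Real.norm_eq_abs, abs_of_nonneg (by positivity)]
      calc ‖u - (r/‖v‖) • v‖ ≤ ‖(1 - r/‖v‖) • u‖ + ‖(r/‖v‖) • (u - v)‖ := by
            rw [key]; exact norm_add_le _ _
        _ = (1 - r/‖v‖) * ‖u‖ + (r/‖v‖) * ‖u - v‖ := by rw [h1, h2]
        _ ≤ 2 * ‖u - v‖ := by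
            have e1 : (1 - r/‖v‖) * ‖u‖ ≤ ‖v‖ - r := by
              have : (1 - r/‖v‖) * ‖u‖ ≤ (1 - r/‖v‖) * ‖v‖ := by
                apply mul_le_mul_of_nonneg_left huv
                have : r/‖v‖ ≤ 1 := (div_le_one hv0).mpr hv.le
                linarith
              calc (1 - r/‖v‖) * ‖u‖ ≤ (1 - r/‖v‖) * ‖v‖ := this
                _ = ‖v‖ - r := by field_simp
            have e2 : ‖v‖ - r ≤ ‖u - v‖ := by linarith
            have e3 : (r/‖v‖) * ‖u - v‖ ≤ 1 * ‖u - v‖ := by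
              apply mul_le_mul_of_nonneg_right _ hnn
              exact (div_le_one hv0).mpr hv.le
            linarith
    · push_neg at hu
      have hu0 : (0:ℝ) < ‖u‖ := lt_trans hr hu
      rw [if_neg (not_le.mpr hu)]
      have key : (r/‖u‖) • u - (r/‖v‖) • v
          = (r/‖u‖) • (u - v) + (r/‖u‖ - r/‖v‖) • v := by
        rw [smul_sub, sub_smul]; abel
      have ht : r/‖v‖ ≤ r/‖u‖ := by
        apply div_le_div_of_nonneg_left hr.le hu0 huv
      have h1 : ‖(r/‖u‖) • (u - v)‖ = (r/‖u‖) * ‖u - v‖ := by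
        rw [norm_smul, Real.norm_eq_abs, abs_of_nonneg (by positivity)]
      have h2 : ‖(r/‖u‖ - r/‖v‖) • v‖ = (r/‖u‖ - r/‖v‖) * ‖v‖ := by
        rw [norm_smul, Real.norm_eq_abs, abs_of_nonneg (by linarith)]
      calc ‖(r/‖u‖) • u - (r/‖v‖) • v‖
          ≤ ‖(r/‖u‖) • (u - v)‖ + ‖(r/‖u‖ - r/‖v‖) • v‖ := by
            rw [key]; exact norm_add_le _ _
        _ = (r/‖u‖) * ‖u - v‖ + (r/‖u‖ - r/‖v‖) * ‖v‖ := by rw [h1, h2]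
        _ ≤ 2 * ‖u - v‖ := by
            have e1 : (r/‖u‖) * ‖u - v‖ ≤ 1 * ‖u - v‖ := by
              apply mul_le_mul_of_nonneg_right _ hnn
              exact (div_le_one hu0).mpr hu.le
            have e2 : (r/‖u‖ - r/‖v‖) * ‖v‖ = (r/‖u‖) * (‖v‖ - ‖u‖) := by
              field_simp
            have e3 : (r/‖u‖) * (‖v‖ - ‖u‖) ≤ 1 * (‖v‖ - ‖u‖) := by
              apply mul_le_mul_of_nonneg_right _ (by linarith)
              exact (div_le_one hu0).mpr hu.le
            linarith

lemma rad_lip {X : Type*} [NormedAddCommGroup X] [NormedSpace ℝ X] {r : ℝ} (hr : 0 < r)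
    (u v : X) :
    ‖(if ‖u‖ ≤ r then u else (r/‖u‖) • u) - (if ‖v‖ ≤ r then v else (r/‖v‖) • v)‖
      ≤ 2 * ‖u - v‖ := by
  rcases le_total ‖u‖ ‖v‖ with hle | hle
  · exact rad_aux hr hle
  · rw [norm_sub_rev, norm_sub_rev u v]
    exact rad_aux hr hle

/-- The key Lipschitz estimate within one ball of the packing: for x, y ∈ B[a,s],
|γ_a(x)f(h_a(x)) - γ_a(y)f(h_a(y))| ≤ ‖f‖_Lip·((4s-2r+1)/(s-r))·‖x-y‖. -/
theorem stmt16 {X : Type*} [NormedAddCommGroup X] [NormedSpace ℝ X] [CompleteSpace X]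
    (r s : ℝ) (hr : 0 < r) (hrs : r < s)
    (A : Set X) (h0A : (0 : X) ∈ A)
    (hpack₁ : ∀ a ∈ A, closedBall a s ⊆ closedBall (0 : X) 1)
    (hpack₂ : ∀ a ∈ A, ∀ a' ∈ A, a ≠ a' → Disjoint (ball a s) (ball a' s))
    (N Bx : Set X) (hN : N = ⋃ a ∈ A, closedBall a r) (hBx : Bx = closedBall (0 : X) 1)
    -- the radial retractions h_a:
    (h : X → X → X)
    (hh : ∀ a x : X, h a x = if ‖x - a‖ ≤ r then x else a + (r / ‖x - a‖) • (x - a))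
    -- the McShane cutoffs γ_a:
    (γ : X → X → ℝ)
    (hγ : ∀ a ∈ A, ∀ x ∈ Bx, γ a x =
      sInf ((fun y => (if ‖y - a‖ ≤ r then (1 : ℝ) else 0) + ‖x - y‖ / (s - r)) ''
        (closedBall a r ∪ (Bx \ closedBall a s))))
    -- f ∈ Lip₀(N) with ‖f‖_Lip ≤ K:
    (f : X → ℝ) (K : ℝ) (hK : 0 ≤ K) (hf0 : f 0 = 0)
    (hf : ∀ x ∈ N, ∀ y ∈ N, |f x - f y| ≤ K * dist x y) :
    ∀ a ∈ A, ∀ x ∈ closedBall a s, ∀ y ∈ closedBall a s,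
      |γ a x * f (h a x) - γ a y * f (h a y)| ≤
        K * ((4 * s - 2 * r + 1) / (s - r)) * ‖x - y‖ := by
  intro a ha x hx y hy
  have hsr : (0:ℝ) < s - r := by linarith
  -- h a z = a + F (z - a)
  have hF : ∀ z : X, h a z = a + (if ‖z - a‖ ≤ r then (z - a) else (r/‖z - a‖) • (z - a)) := by
    intro z
    rw [hh a z]
    by_cases hz : ‖z - a‖ ≤ r
    · rw [if_pos hz, if_pos hz]; abel
    · rw [if_neg hz, if_neg hz]
  -- h a z ∈ closedBall a r
  have hball : ∀ z : X, h a z ∈ closedBall a r := by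
    intro z
    rw [mem_closedBall, dist_eq_norm, hF z, add_sub_cancel_left]
    by_cases hz : ‖z - a‖ ≤ r
    · rwa [if_pos hz]
    · push_neg at hz
      have hz0 : (0:ℝ) < ‖z - a‖ := lt_trans hr hz
      rw [if_neg (not_le.mpr hz), norm_smul, Real.norm_eq_abs,
        abs_of_nonneg (by positivity)]
      rw [div_mul_cancel₀ _ (ne_of_gt hz0)]
  -- h is 2-Lipschitz
  have hlip : ‖h a x - h a y‖ ≤ 2 * ‖x - y‖ := by
    have := rad_lip (X := X) hr (x - a) (y - a)
    have e : (x - a) - (y - a) = x - y := by abel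
    rw [e] at this
    calc ‖h a x - h a y‖
        = ‖(if ‖x - a‖ ≤ r then (x - a) else (r/‖x - a‖) • (x - a))
            - (if ‖y - a‖ ≤ r then (y - a) else (r/‖y - a‖) • (y - a))‖ := by
          rw [hF x, hF y]; congr 1; abel
      _ ≤ 2 * ‖x - y‖ := this
  -- membership in Bx
  have hxB : x ∈ Bx := by rw [hBx]; exact hpack₁ a ha hx
  have hyB : y ∈ Bx := by rw [hBx]; exact hpack₁ a ha hy
  set D := closedBall a r ∪ (Bx \ closedBall a s) with hD
  set g : X → ℝ := fun w => if ‖w - a‖ ≤ r then (1:ℝ) else 0 with hg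
  set φ : X → X → ℝ := fun z w => g w + ‖z - w‖ / (s - r) with hφ
  have hγeq : ∀ z ∈ Bx, γ a z = sInf (φ z '' D) := fun z hz => hγ a ha z hz
  have haD : a ∈ D := Or.inl (mem_closedBall_self hr.le)
  have hne : ∀ z : X, (φ z '' D).Nonempty := fun z => ⟨φ z a, a, haD, rfl⟩
  have hbdd : ∀ z : X, BddBelow (φ z '' D) := by
    intro z
    refine ⟨0, ?_⟩
    rintro b ⟨w, _, rfl⟩
    have : (0:ℝ) ≤ g w := by simp only [hg]; split <;> norm_num
    have : (0:ℝ) ≤ ‖z - w‖ / (s - r) := by positivity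
    simp only [hφ]
    positivity
  -- γ nonneg
  have hγnn : ∀ z ∈ Bx, 0 ≤ γ a z := by
    intro z hz
    rw [hγeq z hz]
    apply le_csInf (hne z)
    rintro b ⟨w, _, rfl⟩
    have h1 : (0:ℝ) ≤ g w := by simp only [hg]; split <;> norm_num
    have h2 : (0:ℝ) ≤ ‖z - w‖ / (s - r) := by positivity
    simp only [hφ]
    linarith
  -- γ ≤ 2 on closedBall a s
  have hγle2 : ∀ z ∈ closedBall a s, z ∈ Bx → γ a z ≤ 2 := by
    intro z hzs hz
    rw [hγeq z hz]
    have hmem : h a z ∈ D := Or.inl (hball z)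
    have hgha : g (h a z) = 1 := by
      simp only [hg]
      rw [if_pos]
      have := hball z
      rwa [mem_closedBall, dist_eq_norm] at this
    have hdist : ‖z - h a z‖ ≤ s - r := by
      rw [hF z]
      by_cases hzr : ‖z - a‖ ≤ r
      · rw [if_pos hzr]
        have : z - (a + (z - a)) = 0 := by abel
        rw [this, norm_zero]; linarith
      · push_neg at hzr
        have hz0 : (0:ℝ) < ‖z - a‖ := lt_trans hr hzr
        rw [if_neg (not_le.mpr hzr)]
        have e : z - (a + (r/‖z - a‖) • (z - a)) = (1 - r/‖z - a‖) • (z - a) := by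
          rw [sub_smul, one_smul]; abel
        rw [e, norm_smul, Real.norm_eq_abs, abs_of_nonneg]
        · have hzs' : ‖z - a‖ ≤ s := by
            rw [mem_closedBall, dist_eq_norm] at hzs; exact hzs
          have : (1 - r/‖z - a‖) * ‖z - a‖ = ‖z - a‖ - r := by field_simp
          rw [this]; linarith
        · have : r/‖z - a‖ ≤ 1 := (div_le_one hz0).mpr hzr.le
          linarith
    calc sInf (φ z '' D) ≤ φ z (h a z) := csInf_le (hbdd z) ⟨h a z, hmem, rfl⟩
      _ = 1 + ‖z - h a z‖ / (s - r) := by simp only [hφ, hgha]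
      _ ≤ 1 + (s - r) / (s - r) := by gcongr
      _ ≤ 2 := by rw [div_self (ne_of_gt hsr)]; norm_num
  -- γ is 1/(s-r)-Lipschitz
  have hγlip : ∀ z₁ ∈ Bx, ∀ z₂ ∈ Bx, γ a z₁ ≤ γ a z₂ + ‖z₁ - z₂‖ / (s - r) := by
    intro z₁ hz₁ z₂ hz₂
    rw [hγeq z₁ hz₁, hγeq z₂ hz₂]
    rw [← sub_le_iff_le_add]
    apply le_csInf (hne z₂)
    rintro b ⟨w, hw, rfl⟩
    rw [sub_le_iff_le_add]
    have h1 : sInf (φ z₁ '' D) ≤ φ z₁ w := csInf_le (hbdd z₁) ⟨w, hw, rfl⟩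
    have h2 : ‖z₁ - w‖ ≤ ‖z₂ - w‖ + ‖z₁ - z₂‖ := by
      calc ‖z₁ - w‖ = ‖(z₁ - z₂) + (z₂ - w)‖ := by congr 1; abel
        _ ≤ ‖z₁ - z₂‖ + ‖z₂ - w‖ := norm_add_le _ _
        _ = ‖z₂ - w‖ + ‖z₁ - z₂‖ := by ring
    have h3 : ‖z₁ - w‖ / (s - r) ≤ ‖z₂ - w‖ / (s - r) + ‖z₁ - z₂‖ / (s - r) := by
      rw [← add_div]
      gcongr
    simp only [hφ] at h1 ⊢
    linarith
  have habsγ : |γ a x - γ a y| ≤ ‖x - y‖ / (s - r) := by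
    rw [abs_sub_le_iff]
    constructor
    · have := hγlip x hxB y hyB; linarith
    · have := hγlip y hyB x hxB
      rw [norm_sub_rev] at this; linarith
  -- memberships in N
  have hmemN : ∀ z : X, h a z ∈ N := by
    intro z
    rw [hN]
    exact Set.mem_biUnion ha (hball z)
  have h0N : (0:X) ∈ N := by
    rw [hN]
    exact Set.mem_biUnion h0A (mem_closedBall_self hr.le)
  -- |f (h a y)| ≤ K
  have hfy : |f (h a y)| ≤ K := by
    have := hf (h a y) (hmemN y) 0 h0N
    rw [hf0, sub_zero] at this
    have hd : dist (h a y) 0 ≤ 1 := by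
      have : h a y ∈ closedBall (0:X) 1 :=
        hpack₁ a ha (closedBall_subset_closedBall hrs.le (hball y))
      rwa [mem_closedBall] at this
    calc |f (h a y)| ≤ K * dist (h a y) 0 := this
      _ ≤ K * 1 := mul_le_mul_of_nonneg_left hd hK
      _ = K := mul_one K
  -- |f hx - f hy| ≤ 2K‖x-y‖
  have hfdiff : |f (h a x) - f (h a y)| ≤ K * (2 * ‖x - y‖) := by
    calc |f (h a x) - f (h a y)| ≤ K * dist (h a x) (h a y) :=
          hf _ (hmemN x) _ (hmemN y)
      _ ≤ K * (2 * ‖x - y‖) := by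
          apply mul_le_mul_of_nonneg_left _ hK
          rw [dist_eq_norm]; exact hlip
  -- assemble
  have hnx : (0:ℝ) ≤ ‖x - y‖ := norm_nonneg _
  have key : γ a x * f (h a x) - γ a y * f (h a y)
      = γ a x * (f (h a x) - f (h a y)) + (γ a x - γ a y) * f (h a y) := by ring
  have step : |γ a x * f (h a x) - γ a y * f (h a y)|
      ≤ 2 * (K * (2 * ‖x - y‖)) + (‖x - y‖ / (s - r)) * K := by
    rw [key]
    calc |γ a x * (f (h a x) - f (h a y)) + (γ a x - γ a y) * f (h a y)|
        ≤ |γ a x * (f (h a x) - f (h a y))| + |(γ a x - γ a y) * f (h a y)| :=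
          abs_add_le _ _
      _ = |γ a x| * |f (h a x) - f (h a y)| + |γ a x - γ a y| * |f (h a y)| := by
          rw [abs_mul, abs_mul]
      _ ≤ 2 * (K * (2 * ‖x - y‖)) + (‖x - y‖ / (s - r)) * K := by
          have hγx : |γ a x| ≤ 2 := by
            rw [abs_of_nonneg (hγnn x hxB)]
            exact hγle2 x hx hxB
          gcongr
  have final : 2 * (K * (2 * ‖x - y‖)) + (‖x - y‖ / (s - r)) * K
      ≤ K * ((4 * s - 2 * r + 1) / (s - r)) * ‖x - y‖ := by
    have e : (4 * s - 2 * r + 1) / (s - r) = 4 + (2*r)/(s-r) + 1/(s-r) := by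
      field_simp; ring
    rw [e]
    have h1 : (0:ℝ) ≤ (2*r)/(s-r) := by positivity
    have h2 : (‖x - y‖ / (s - r)) * K = K * (1/(s-r)) * ‖x - y‖ := by ring
    rw [h2]
    nlinarith [mul_nonneg (mul_nonneg hK h1) hnx]
  linarith
end

section
/- Let X and Y be Banach spaces such that X is isomorphic to a complemented subspace of Y, Y is isomorphic to a complemented subspace of X, and X is isomorphic to the ℓ₁-sum (or ℓ∞-sum) of countably many (or κ-many) copies of itself, with Y complemented in that sum. Then under the Pełczyński decomposition hypotheses—X ≅ (⊕_I X) for an index set I, Y complemented in X, and X complemented in Y—one concludes X ≅ Y. -/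
/-!
Write `ℓ¹(E)` for `lp (fun _ : ℕ => E) 1`. Splitting off the first coordinate gives
`ℓ¹(E) ≅ E × ℓ¹(E)`, and `ℓ¹` commutes with finite products, so
`X ≅ ℓ¹(Y × A) ≅ ℓ¹(Y) × ℓ¹(A) ≅ Y × ℓ¹(Y) × ℓ¹(A) ≅ Y × ℓ¹(Y × A) ≅ Y × X`.
Likewise `X ≅ ℓ¹(X) ≅ X × ℓ¹(X) ≅ X × X`, whence `Y ≅ X × B ≅ X × X × B ≅ X × Y`.
Therefore `X ≅ Y × X ≅ X × Y ≅ Y`.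
-/

universe u

instance : Fact ((1 : ENNReal) ≤ 1) := ⟨le_rfl⟩

open scoped ENNReal

theorem memℓp_one_iff {α : Type*} {E : α → Type*} [∀ i, NormedAddCommGroup (E i)]
    {f : ∀ i, E i} : Memℓp f 1 ↔ Summable fun i => ‖f i‖ := by
  rw [memℓp_gen_iff (by simp)]
  simp

namespace lp

variable {𝕜 α : Type*} [NontriviallyNormedField 𝕜]

section One

variable {E : α → Type*} [∀ i, NormedAddCommGroup (E i)]

theorem norm_eq_tsum_norm (f : lp E 1) : ‖f‖ = ∑' i, ‖f i‖ := by
  rw [norm_eq_tsum_rpow (by simp)]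
  simp

end One

section Shift

variable {E : ℕ → Type*} [∀ n, NormedAddCommGroup (E n)] [∀ n, NormedSpace 𝕜 (E n)]

theorem summable_norm_succ (f : lp E 1) : Summable fun n => ‖f (n + 1)‖ :=
  (summable_nat_add_iff 1).2 (memℓp_one_iff.1 f.2)

variable (𝕜 E) in
noncomputable def tail : lp E 1 →L[𝕜] lp (fun n => E (n + 1)) 1 :=
  LinearMap.mkContinuous
    { toFun := fun f => ⟨fun n => f (n + 1), memℓp_one_iff.2 (summable_norm_succ f)⟩
      map_add' := fun _ _ => rfl
      map_smul' := fun _ _ => rfl }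
    1 fun f => by
      have hf : Summable fun n => ‖f n‖ := memℓp_one_iff.1 f.2
      rw [one_mul, norm_eq_tsum_norm, norm_eq_tsum_norm, hf.tsum_eq_zero_add]
      exact le_add_of_nonneg_left (norm_nonneg _)

def consFun (x : E 0) (g : ∀ n, E (n + 1)) : ∀ n, E n
  | 0 => x
  | n + 1 => g n

theorem summable_norm_consFun (x : E 0) (g : lp (fun n => E (n + 1)) 1) :
    Summable fun n => ‖consFun x g n‖ :=
  (summable_nat_add_iff 1).1 (memℓp_one_iff.1 g.2)

variable (𝕜 E) in
noncomputable def cons : E 0 × lp (fun n => E (n + 1)) 1 →L[𝕜] lp E 1 :=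
  LinearMap.mkContinuous
    { toFun := fun y => ⟨consFun y.1 y.2, memℓp_one_iff.2 (summable_norm_consFun y.1 y.2)⟩
      map_add' := fun _ _ => lp.ext <| funext fun n => by cases n <;> rfl
      map_smul' := fun _ _ => lp.ext <| funext fun n => by cases n <;> rfl }
    2 fun y => by
      rw [norm_eq_tsum_norm]
      calc ∑' n, ‖consFun y.1 y.2 n‖ = ‖y.1‖ + ‖y.2‖ := by
            rw [(summable_norm_consFun y.1 y.2).tsum_eq_zero_add, norm_eq_tsum_norm]; rfl
        _ ≤ 2 * ‖y‖ := by
            linarith [norm_fst_le y, norm_snd_le y]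

variable (𝕜 E) in
noncomputable def headTailEquiv : lp E 1 ≃L[𝕜] E 0 × lp (fun n => E (n + 1)) 1 :=
  .equivOfInverse ((evalCLM 𝕜 E 1 0).prod (tail 𝕜 E)) (cons 𝕜 E)
    (fun f => lp.ext <| funext fun n => by cases n <;> rfl)
    (fun _ => rfl)

end Shift

variable {p : ℝ≥0∞} [Fact (1 ≤ p)]

section Prod

variable {E F : α → Type*} [∀ i, NormedAddCommGroup (E i)] [∀ i, NormedSpace 𝕜 (E i)]
  [∀ i, NormedAddCommGroup (F i)] [∀ i, NormedSpace 𝕜 (F i)]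

open ContinuousLinearMap in
variable (𝕜 p) in
noncomputable def prodEquiv : lp (fun i => E i × F i) p ≃L[𝕜] lp E p × lp F p :=
  .equivOfInverse
    ((mapCLM p (fun i => fst 𝕜 (E i) (F i)) zero_le_one fun _ => norm_fst_le ..).prod
      (mapCLM p (fun i => snd 𝕜 (E i) (F i)) zero_le_one fun _ => norm_snd_le ..))
    ((mapCLM p (fun i => inl 𝕜 (E i) (F i)) zero_le_one fun _ => norm_inl_le_one ..).coprod
      (mapCLM p (fun i => inr 𝕜 (E i) (F i)) zero_le_one fun _ => norm_inr_le_one ..))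
    (fun f => by ext <;> simp)
    (fun g => by ext <;> simp)

end Prod

variable {E F : Type*} [NormedAddCommGroup E] [NormedSpace 𝕜 E]
  [NormedAddCommGroup F] [NormedSpace 𝕜 F]

variable (α p) in
noncomputable def congrRight (u : E ≃L[𝕜] F) :
    lp (fun _ : α => E) p ≃L[𝕜] lp (fun _ : α => F) p :=
  .equivOfInverse
    (mapCLM p (fun _ => (u : E →L[𝕜] F)) (norm_nonneg _) fun _ => le_rfl)
    (mapCLM p (fun _ => (u.symm : F →L[𝕜] E)) (norm_nonneg _) fun _ => le_rfl)
    (fun f => by ext; simp)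
    (fun f => by ext; simp)

end lp

namespace ContinuousLinearEquiv

section Absorption

variable {R X Y B : Type*} [Semiring R]
  [TopologicalSpace X] [AddCommMonoid X] [Module R X]
  [TopologicalSpace Y] [AddCommMonoid Y] [Module R Y]
  [TopologicalSpace B] [AddCommMonoid B] [Module R B]

def prodLeftOfProdSelf (s : X ≃L[R] X × X) (g : (X × B) ≃L[R] Y) : Y ≃L[R] X × Y :=
  g.symm.trans <| (s.prodCongr (ContinuousLinearEquiv.refl R B)).trans <|
    (prodAssoc R X X B).trans <| (ContinuousLinearEquiv.refl R X).prodCongr g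

end Absorption

variable {𝕜 X Y A : Type*} [NontriviallyNormedField 𝕜]
  [NormedAddCommGroup X] [NormedSpace 𝕜 X] [NormedAddCommGroup Y] [NormedSpace 𝕜 Y]
  [NormedAddCommGroup A] [NormedSpace 𝕜 A]

noncomputable def prodSelfOfLpOne (e : X ≃L[𝕜] lp (fun _ : ℕ => X) 1) : X ≃L[𝕜] X × X :=
  e.trans <| (lp.headTailEquiv 𝕜 _).trans <| (ContinuousLinearEquiv.refl 𝕜 X).prodCongr e.symm

noncomputable def prodLeftOfLpOne (e : X ≃L[𝕜] lp (fun _ : ℕ => X) 1) (f : (Y × A) ≃L[𝕜] X) :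
    X ≃L[𝕜] Y × X :=
  e.trans <| (lp.congrRight ℕ 1 f.symm).trans <| (lp.prodEquiv 𝕜 1).trans <|
    ((lp.headTailEquiv 𝕜 _).prodCongr (ContinuousLinearEquiv.refl 𝕜 _)).trans <|
    (prodAssoc 𝕜 _ _ _).trans <| (ContinuousLinearEquiv.refl 𝕜 Y).prodCongr <|
    (lp.prodEquiv 𝕜 1).symm.trans <| (lp.congrRight ℕ 1 f).trans e.symm

end ContinuousLinearEquiv

theorem stmt18_general (X Y A B : Type u)
    [NormedAddCommGroup X] [NormedSpace ℝ X]
    [NormedAddCommGroup Y] [NormedSpace ℝ Y]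
    [NormedAddCommGroup A] [NormedSpace ℝ A]
    [NormedAddCommGroup B] [NormedSpace ℝ B]
    (e1 : X ≃L[ℝ] lp (fun _ : ℕ => X) 1)
    (e2 : (Y × A) ≃L[ℝ] X)
    (e3 : (X × B) ≃L[ℝ] Y) :
    Nonempty (X ≃L[ℝ] Y) := by
  have eX : X ≃L[ℝ] Y × X := e1.prodLeftOfLpOne e2
  have eY : Y ≃L[ℝ] X × Y := e1.prodSelfOfLpOne.prodLeftOfProdSelf e3
  exact ⟨eX.trans <| (ContinuousLinearEquiv.prodComm ℝ Y X).trans eY.symm⟩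

/-- Pełczyński's decomposition method: if X ≅ (⊕_ℕ X)_{ℓ₁}, Y is complemented in X
(Y ⊕ A ≅ X) and X is complemented in Y (X ⊕ B ≅ Y), then X ≅ Y. -/
theorem stmt18 (X Y A B : Type u)
    [NormedAddCommGroup X] [NormedSpace ℝ X] [CompleteSpace X]
    [NormedAddCommGroup Y] [NormedSpace ℝ Y] [CompleteSpace Y]
    [NormedAddCommGroup A] [NormedSpace ℝ A] [CompleteSpace A]
    [NormedAddCommGroup B] [NormedSpace ℝ B] [CompleteSpace B]
    (e1 : X ≃L[ℝ] lp (fun _ : ℕ => X) 1)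
    (e2 : (Y × A) ≃L[ℝ] X)
    (e3 : (X × B) ≃L[ℝ] Y) :
    Nonempty (X ≃L[ℝ] Y) :=
  stmt18_general X Y A B e1 e2 e3
end
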